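/- arXiv:1409.3712 — 9 statements merged into one kernel-verified Lean document; each statement's English description precedes it below -/
import Mathlib

section
/- For every integer r ≥ 2 there exists a nonnegative integer c (namely the number of lines on a general hypersurface of degree 2r−3 in P^r) such that for every choice of pairwise distinct rational numbers λ_0, …, λ_r, the degree-one Bott sum L(2r−3; λ_0,…,λ_r) equals c. In particular, the value of the sum Σ_{0 ≤ i < j ≤ r} ( ∏_{a=0}^{2r−3} (a·λ_i + (2r−3−a)·λ_j) ) / ( ∏_{l ∈ {0,…,r}, l∉{i,j}} (λ_i − λ_l)·(λ_j − λ_l) ) does not depend on the choice of pairwise distinct λ_0, …, λ_r. -/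
/-- The degree-one Bott sum `L(d₁,…,d_k; λ₀,…,λ_r)` (with `n = r + 1` torus
weights `lam` and multidegree given by the list `ds`):
`∑_{0 ≤ i < j ≤ r} (∏_m ∏_{a=0}^{d_m} (a·λ_i + (d_m − a)·λ_j)) /
  (∏_{l ∉ {i,j}} (λ_i − λ_l)·(λ_j − λ_l))`. -/
def bottSum1 {n : ℕ} (ds : List ℕ) (lam : Fin n → ℚ) : ℚ :=
  ∑ i : Fin n, ∑ j : Fin n,
    if i < j then
      (ds.map (fun d => ∏ a ∈ Finset.range (d + 1),
        ((a : ℚ) * lam i + ((d : ℚ) - (a : ℚ)) * lam j))).prod /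
      ∏ l ∈ Finset.univ.filter (fun l => l ≠ i ∧ l ≠ j),
        ((lam i - lam l) * (lam j - lam l))
    else 0



open Finset Polynomial

lemma leadingCoeff_basisDivisor {x y : ℚ} (h : x ≠ y) :
    (Lagrange.basisDivisor x y).leadingCoeff = (x - y)⁻¹ := by
  rw [Lagrange.basisDivisor, leadingCoeff_mul, leadingCoeff_C,
    (monic_X_sub_C y).leadingCoeff, mul_one]

lemma divdiff {r : ℕ} (lam : Fin (r + 1) → ℚ) (hinj : Function.Injective lam)
    (m : ℕ) (hm : m ≤ r) :
    ∑ i : Fin (r + 1), lam i ^ m * (∏ l ∈ Finset.univ.erase i, (lam i - lam l))⁻¹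
      = if m = r then 1 else 0 := by
  have hcard : (Finset.univ : Finset (Fin (r + 1))).card = r + 1 := by simp
  have hinj' : Set.InjOn lam (Finset.univ : Finset (Fin (r+1))) := hinj.injOn
  have h : (X ^ m : ℚ[X]) =
      Lagrange.interpolate Finset.univ lam (fun i => lam i ^ m) := by
    have := Lagrange.eq_interpolate (f := (X ^ m : ℚ[X])) hinj'
      (by rw [hcard, degree_X_pow]; exact_mod_cast Nat.lt_succ_of_le hm)
    simpa using this
  have h2 := congrArg (fun p => Polynomial.coeff p r) h
  simp only [coeff_X_pow, Lagrange.interpolate_apply] at h2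
  rw [Polynomial.finset_sum_coeff] at h2
  have h3 : ∀ i : Fin (r+1),
      (Polynomial.C (lam i ^ m) * Lagrange.basis Finset.univ lam i).coeff r
        = lam i ^ m * (∏ l ∈ Finset.univ.erase i, (lam i - lam l))⁻¹ := by
    intro i
    rw [coeff_C_mul]
    congr 1
    have hnd : (Lagrange.basis Finset.univ lam i).natDegree = r := by
      rw [Lagrange.natDegree_basis hinj' (mem_univ i), hcard]; omega
    have hlc : (Lagrange.basis Finset.univ lam i).coeff r
        = (Lagrange.basis Finset.univ lam i).leadingCoeff := by
      have h0 := Polynomial.coeff_natDegree (p := Lagrange.basis Finset.univ lam i)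
      rwa [hnd] at h0
    rw [hlc, Lagrange.basis, leadingCoeff_prod, ← Finset.prod_inv_distrib]
    refine Finset.prod_congr rfl fun l hl => ?_
    rw [leadingCoeff_basisDivisor]
    exact fun e => (Finset.mem_erase.mp hl).1 (hinj e.symm)
  rw [Finset.sum_congr rfl (fun i _ => h3 i)] at h2
  rw [← h2]
  by_cases h : m = r
  · simp [h]
  · rw [if_neg h, if_neg (fun e => h e.symm)]


open Finset

def esum (s : Finset ℕ) (u v : ℕ → ℚ) (t : ℕ) : ℚ :=
  ∑ T ∈ s.powerset.filter (fun T => T.card = t), (∏ a ∈ T, u a) * ∏ a ∈ s \ T, v a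

lemma esum_empty (u v : ℕ → ℚ) (t : ℕ) :
    esum ∅ u v t = if t = 0 then 1 else 0 := by
  by_cases h : t = 0
  · simp [esum, h, Finset.filter_singleton]
  · rw [if_neg h]
    refine Finset.sum_eq_zero fun T hT => ?_
    simp only [Finset.mem_filter, Finset.powerset_empty, Finset.mem_singleton] at hT
    exact absurd (hT.1 ▸ hT.2) (by simpa using Ne.symm h)

lemma esum_eq_sum_if (s : Finset ℕ) (u v : ℕ → ℚ) (t : ℕ) :
    esum s u v t = ∑ T ∈ s.powerset,
      (if T.card = t then (∏ a ∈ T, u a) * ∏ a ∈ s \ T, v a else 0) := by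
  rw [esum, Finset.sum_filter]

lemma insert_sdiff_of_not_mem {s T : Finset ℕ} {b : ℕ} (hb : b ∉ s) (hT : T ⊆ s) :
    insert b s \ T = insert b (s \ T) := by
  ext x
  simp only [Finset.mem_sdiff, Finset.mem_insert]
  constructor
  · rintro ⟨h1 | h1, h2⟩
    · exact Or.inl h1
    · exact Or.inr ⟨h1, h2⟩
  · rintro (rfl | ⟨h1, h2⟩)
    · exact ⟨Or.inl rfl, fun hx => hb (hT hx)⟩
    · exact ⟨Or.inr h1, h2⟩

lemma insert_sdiff_insert' {s T : Finset ℕ} {b : ℕ} (hb : b ∉ s) (hT : T ⊆ s) :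
    insert b s \ insert b T = s \ T := by
  ext x
  simp only [Finset.mem_sdiff, Finset.mem_insert, not_or]
  constructor
  · rintro ⟨h1 | h1, h2, h3⟩
    · exact absurd h1 h2
    · exact ⟨h1, h3⟩
  · rintro ⟨h1, h2⟩
    exact ⟨Or.inr h1, fun e => hb (e ▸ h1), h2⟩

lemma esum_insert {s : Finset ℕ} {b : ℕ} (hb : b ∉ s) (u v : ℕ → ℚ) (t : ℕ) :
    esum (insert b s) u v (t + 1)
      = v b * esum s u v (t + 1) + u b * esum s u v t := by
  rw [esum_eq_sum_if, Finset.sum_powerset_insert hb]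
  congr 1
  · rw [esum_eq_sum_if, Finset.mul_sum]
    refine Finset.sum_congr rfl fun T hT => ?_
    rw [Finset.mem_powerset] at hT
    rw [insert_sdiff_of_not_mem hb hT,
      Finset.prod_insert (fun hx => hb ((Finset.mem_sdiff.mp hx).1))]
    by_cases h : T.card = t + 1 <;> simp [h] <;> ring
  · rw [esum_eq_sum_if, Finset.mul_sum]
    refine Finset.sum_congr rfl fun T hT => ?_
    rw [Finset.mem_powerset] at hT
    have hbT : b ∉ T := fun hx => hb (hT hx)
    rw [Finset.card_insert_of_notMem hbT, insert_sdiff_insert' hb hT,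
      Finset.prod_insert hbT]
    by_cases h : T.card = t <;> simp [h] <;> ring

lemma esum_insert_zero {s : Finset ℕ} {b : ℕ} (hb : b ∉ s) (u v : ℕ → ℚ) :
    esum (insert b s) u v 0 = v b * esum s u v 0 := by
  rw [esum_eq_sum_if, Finset.sum_powerset_insert hb]
  have h2 : ∑ T ∈ s.powerset,
      (if (insert b T).card = 0 then (∏ a ∈ insert b T, u a) * ∏ a ∈ insert b s \ insert b T, v a else 0) = 0 := by
    refine Finset.sum_eq_zero fun T hT => ?_
    rw [if_neg (by simp)]
  rw [h2, add_zero, esum_eq_sum_if, Finset.mul_sum]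
  refine Finset.sum_congr rfl fun T hT => ?_
  rw [Finset.mem_powerset] at hT
  rw [insert_sdiff_of_not_mem hb hT,
    Finset.prod_insert (fun hx => hb ((Finset.mem_sdiff.mp hx).1))]
  by_cases h : T.card = 0 <;> simp [h] <;> ring
open Finset

lemma esum_main {s : Finset ℕ} {u v : ℕ → ℚ} (hu : ∀ a ∈ s, 0 < u a)
    (hv : ∀ a ∈ s, 0 < v a) :
    (∀ t, t ≤ s.card → 0 < esum s u v t) ∧ (∀ t, s.card < t → esum s u v t = 0) ∧
      (∀ t, esum s u v t * esum s u v (t + 2) ≤ esum s u v (t + 1) ^ 2) := by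
  classical
  induction s using Finset.induction_on with
  | empty =>
    refine ⟨fun t ht => ?_, fun t ht => ?_, fun t => ?_⟩
    · obtain rfl : t = 0 := Nat.le_zero.mp (by simpa using ht)
      simp [esum_empty]
    · rw [esum_empty, if_neg (by simp at ht; omega)]
    · simp [esum_empty]
  | insert b s hb IH =>
    obtain ⟨hpos, hzero, hlc⟩ := IH (fun a ha => hu a (mem_insert_of_mem ha))
      (fun a ha => hv a (mem_insert_of_mem ha))
    have hub : 0 < u b := hu b (mem_insert_self b s)
    have hvb : 0 < v b := hv b (mem_insert_self b s)
    have hnn : ∀ t, 0 ≤ esum s u v t := by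
      intro t
      rcases le_or_gt t s.card with h | h
      · exact (hpos t h).le
      · exact (hzero t h).ge
    have hcross : ∀ k, esum s u v k * esum s u v (k + 3)
        ≤ esum s u v (k + 1) * esum s u v (k + 2) := by
      intro k
      rcases le_or_gt (k + 3) s.card with h | h
      · have h1 := hlc k
        have h2 := hlc (k + 1)
        have p1 := hpos (k + 1) (by omega)
        have p2 := hpos (k + 2) (by omega)
        have p0 := hpos k (by omega)
        have p3 := hpos (k + 3) h
        nlinarith
      · rw [hzero (k + 3) h, mul_zero]
        exact mul_nonneg (hnn _) (hnn _)
    refine ⟨fun t ht => ?_, fun t ht => ?_, fun t => ?_⟩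
    · rcases t with _ | t
      · rw [esum_insert_zero hb]
        exact mul_pos hvb (hpos 0 (Nat.zero_le _))
      · rw [esum_insert hb]
        rw [card_insert_of_notMem hb] at ht
        have h1 : 0 < u b * esum s u v t := mul_pos hub (hpos t (by omega))
        have h2 : 0 ≤ v b * esum s u v (t + 1) := mul_nonneg hvb.le (hnn _)
        linarith
    · rcases t with _ | t
      · simp [card_insert_of_notMem hb] at ht
      · rw [esum_insert hb]
        rw [card_insert_of_notMem hb] at ht
        rw [hzero t (by omega), hzero (t + 1) (by omega)]
        ring
    · rcases t with _ | t
      · rw [esum_insert_zero hb, esum_insert hb, esum_insert hb]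
        have h1 := hlc 0
        have c0 := hnn 0
        have c1 := hnn 1
        have c2 := hnn 2
        norm_num at h1 ⊢
        nlinarith [mul_pos hvb hub, mul_nonneg c0 c1,
          sq_nonneg (u b * esum s u v 0),
          mul_le_mul_of_nonneg_left h1 (sq_nonneg (v b))]
      · rw [esum_insert hb, esum_insert hb, esum_insert hb]
        have h1 := hlc t
        have h2 := hlc (t + 1)
        have hc := hcross t
        have c0 := hnn t
        have c1 := hnn (t + 1)
        have c2 := hnn (t + 2)
        have c3 := hnn (t + 3)
        nlinarith [mul_pos hvb hub, sq_nonneg (v b), sq_nonneg (u b)]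
open Finset

lemma image_refl_sdiff {d : ℕ} {T : Finset ℕ} (hT : T ⊆ Ioo 0 d) :
    Ioo 0 d \ (Ioo 0 d \ T).image (fun a => d - a) = T.image (fun a => d - a) := by
  ext x
  simp only [Finset.mem_sdiff, Finset.mem_image, Finset.mem_Ioo]
  constructor
  · rintro ⟨⟨hx0, hxd⟩, hnot⟩
    refine ⟨d - x, ?_, by omega⟩
    by_contra hdx
    exact hnot ⟨d - x, ⟨⟨by omega, by omega⟩, hdx⟩, by omega⟩
  · rintro ⟨y, hy, rfl⟩
    have hy' := hT hy
    simp only [Finset.mem_Ioo] at hy'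
    refine ⟨⟨by omega, by omega⟩, ?_⟩
    rintro ⟨z, ⟨⟨hz0, hzd⟩, hzT⟩, hz⟩
    have : z = y := by omega
    exact hzT (this ▸ hy)

lemma esum_card {d : ℕ} {T : Finset ℕ} (hT : T ⊆ Ioo 0 d) :
    ((Ioo 0 d \ T).image (fun a => d - a)).card = (d - 1) - T.card := by
  have hinj : Set.InjOn (fun a => d - a) (Ioo 0 d \ T : Finset ℕ) := by
    intro x hx y hy hxy
    simp only [Finset.coe_sdiff, Set.mem_diff, Finset.mem_coe, Finset.mem_Ioo] at hx hy
    simp only at hxy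
    omega
  rw [Finset.card_image_of_injOn hinj, Finset.card_sdiff_of_subset hT, Nat.card_Ioo]
  omega

lemma esum_symm (d t : ℕ) (ht : t ≤ d - 1) :
    esum (Ioo 0 d) (fun a => (a : ℚ)) (fun a => (d : ℚ) - a) t
      = esum (Ioo 0 d) (fun a => (a : ℚ)) (fun a => (d : ℚ) - a) ((d - 1) - t) := by
  rw [esum, esum]
  refine Finset.sum_nbij' (i := fun T => (Ioo 0 d \ T).image (fun a => d - a))
    (j := fun T => (Ioo 0 d \ T).image (fun a => d - a)) ?_ ?_ ?_ ?_ ?_ |>.symm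
  · intro T hT
    simp only [Finset.mem_filter, Finset.mem_powerset] at hT ⊢
    refine ⟨fun x hx => ?_, by rw [esum_card hT.1, hT.2]; omega⟩
    simp only [Finset.mem_image, Finset.mem_sdiff, Finset.mem_Ioo] at hx
    obtain ⟨y, ⟨⟨h1, h2⟩, _⟩, rfl⟩ := hx
    simp only [Finset.mem_Ioo]
    omega
  · intro T hT
    simp only [Finset.mem_filter, Finset.mem_powerset] at hT ⊢
    refine ⟨fun x hx => ?_, ?_⟩
    · simp only [Finset.mem_image, Finset.mem_sdiff, Finset.mem_Ioo] at hx
      obtain ⟨y, ⟨⟨h1, h2⟩, _⟩, rfl⟩ := hx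
      simp only [Finset.mem_Ioo]
      omega
    · rw [esum_card hT.1, hT.2]
  · intro T hT
    simp only [Finset.mem_filter, Finset.mem_powerset] at hT
    show Finset.image (fun a => d - a) (Ioo 0 d \ Finset.image (fun a => d - a) (Ioo 0 d \ T)) = T
    rw [image_refl_sdiff hT.1]
    ext x
    simp only [Finset.mem_image]
    constructor
    · rintro ⟨y, ⟨z, hz, rfl⟩, rfl⟩
      have := Finset.mem_Ioo.mp (hT.1 hz)
      have : d - (d - z) = z := by omega
      rwa [this]
    · intro hx
      have := Finset.mem_Ioo.mp (hT.1 hx)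
      exact ⟨d - x, ⟨x, hx, rfl⟩, by omega⟩
  · intro T hT
    simp only [Finset.mem_filter, Finset.mem_powerset] at hT
    show Finset.image (fun a => d - a) (Ioo 0 d \ Finset.image (fun a => d - a) (Ioo 0 d \ T)) = T
    rw [image_refl_sdiff hT.1]
    ext x
    simp only [Finset.mem_image]
    constructor
    · rintro ⟨y, ⟨z, hz, rfl⟩, rfl⟩
      have := Finset.mem_Ioo.mp (hT.1 hz)
      have : d - (d - z) = z := by omega
      rwa [this]
    · intro hx
      have := Finset.mem_Ioo.mp (hT.1 hx)
      exact ⟨d - x, ⟨x, hx, rfl⟩, by omega⟩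
  · intro T hT
    simp only [Finset.mem_filter, Finset.mem_powerset] at hT
    have hinj : Set.InjOn (fun a => d - a) (Ioo 0 d \ T : Finset ℕ) := by
      intro x hx y hy hxy
      simp only [Finset.coe_sdiff, Set.mem_diff, Finset.mem_coe, Finset.mem_Ioo] at hx hy
      simp only at hxy
      omega
    rw [image_refl_sdiff hT.1, Finset.prod_image hinj]
    have hinj2 : Set.InjOn (fun a => d - a) (T : Finset ℕ) := by
      intro x hx y hy hxy
      have h1 := Finset.mem_Ioo.mp (hT.1 hx)
      have h2 := Finset.mem_Ioo.mp (hT.1 hy)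
      simp only at hxy
      omega
    rw [Finset.prod_image hinj2]
    rw [mul_comm]
    congr 1
    · refine Finset.prod_congr rfl fun x hx => ?_
      have := Finset.mem_Ioo.mp ((Finset.mem_sdiff.mp hx).1)
      push_cast [Nat.cast_sub (by omega : x ≤ d)]
      ring
    · refine Finset.prod_congr rfl fun x hx => ?_
      have := Finset.mem_Ioo.mp (hT.1 hx)
      push_cast [Nat.cast_sub (by omega : x ≤ d)]
      ring

def nesum (d t : ℕ) : ℕ :=
  ∑ T ∈ (Ioo 0 d).powerset.filter (fun T => T.card = t),
    (∏ a ∈ T, a) * ∏ a ∈ Ioo 0 d \ T, (d - a)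

lemma nesum_cast (d t : ℕ) :
    (nesum d t : ℚ) = esum (Ioo 0 d) (fun a => (a : ℚ)) (fun a => (d : ℚ) - a) t := by
  rw [nesum, esum]
  push_cast
  refine Finset.sum_congr rfl fun T hT => ?_
  simp only [Finset.mem_filter, Finset.mem_powerset] at hT
  congr 1
  refine Finset.prod_congr rfl fun x hx => ?_
  have := Finset.mem_Ioo.mp ((Finset.mem_sdiff.mp hx).1)
  push_cast [Nat.cast_sub (by omega : x ≤ d)]
  ring
open Finset

lemma half_sum {n : ℕ} (G : Fin n → Fin n → ℚ) (hsym : ∀ i j, G j i = G i j)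
    (hdiag : ∀ i, G i i = 0) :
    ∑ i : Fin n, ∑ j : Fin n, (if i < j then G i j else 0)
      = (1 / 2) * ∑ i : Fin n, ∑ j : Fin n, G i j := by
  have key : ∑ i : Fin n, ∑ j : Fin n, G i j
      = 2 * ∑ i : Fin n, ∑ j : Fin n, (if i < j then G i j else 0) := by
    calc ∑ i : Fin n, ∑ j : Fin n, G i j
        = ∑ i : Fin n, ∑ j : Fin n,
            ((if i < j then G i j else 0) + (if j < i then G i j else 0)) := by
          refine Finset.sum_congr rfl fun i _ => Finset.sum_congr rfl fun j _ => ?_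
          rcases lt_trichotomy i j with h | h | h
          · simp [h, not_lt_of_gt h]
          · subst h
            simp [hdiag, lt_irrefl]
          · simp [h, not_lt_of_gt h]
      _ = (∑ i : Fin n, ∑ j : Fin n, (if i < j then G i j else 0))
            + ∑ i : Fin n, ∑ j : Fin n, (if j < i then G i j else 0) := by
          rw [← Finset.sum_add_distrib]
          exact Finset.sum_congr rfl fun i _ => Finset.sum_add_distrib
      _ = 2 * ∑ i : Fin n, ∑ j : Fin n, (if i < j then G i j else 0) := by
          have : ∑ i : Fin n, ∑ j : Fin n, (if j < i then G i j else 0)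
              = ∑ i : Fin n, ∑ j : Fin n, (if i < j then G i j else 0) := by
            rw [Finset.sum_comm]
            exact Finset.sum_congr rfl fun i _ => Finset.sum_congr rfl fun j _ => by
              rw [hsym]
          rw [this]; ring
  linarith
lemma esum_zero' (s : Finset ℕ) (u v : ℕ → ℚ) :
    esum s u v 0 = ∏ a ∈ s, v a := by
  rw [esum]
  have h : s.powerset.filter (fun T => T.card = 0) = {∅} := by
    ext T
    simp only [Finset.mem_filter, Finset.mem_powerset, Finset.card_eq_zero,
      Finset.mem_singleton]
    exact ⟨fun h => h.2, fun h => ⟨h ▸ Finset.empty_subset s, h⟩⟩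
  rw [h]
  simp

lemma key_ineq (k : ℕ) : nesum (2 * k + 1) (k + 1) ≤ nesum (2 * k + 1) k := by
  set d := 2 * k + 1 with hd
  have hcard : (Ioo 0 d).card = 2 * k := by rw [Nat.card_Ioo]; omega
  have hu : ∀ a ∈ Ioo 0 d, 0 < ((a : ℚ)) := fun a ha => by
    have := Finset.mem_Ioo.mp ha
    exact_mod_cast this.1
  have hv : ∀ a ∈ Ioo 0 d, 0 < ((d : ℚ) - (a : ℚ)) := fun a ha => by
    have := Finset.mem_Ioo.mp ha
    have : (a : ℚ) < (d : ℚ) := by exact_mod_cast this.2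
    linarith
  obtain ⟨hpos, hzero, hlc⟩ := esum_main (s := Ioo 0 d)
    (u := fun a => (a : ℚ)) (v := fun a => (d : ℚ) - a) hu hv
  rw [← Nat.cast_le (α := ℚ), nesum_cast, nesum_cast]
  rcases Nat.eq_zero_or_pos k with rfl | hk
  · rw [hzero 1 (by omega)]
    exact (hpos 0 (by omega)).le
  · obtain ⟨m, rfl⟩ := Nat.exists_eq_add_of_le hk
    have hsymm := esum_symm d (1 + m + 1) (by omega)
    have harith : d - 1 - (1 + m + 1) = m := by omega
    rw [harith] at hsymm
    have hlcm := hlc m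
    have p1 := hpos (1 + m) (by omega)
    have p2 := hpos (1 + m + 1) (by omega)
    have pm := hpos m (by omega)
    have e1 : m + 1 = 1 + m := by omega
    have e2 : m + 2 = 1 + m + 1 := by omega
    rw [e1, e2] at hlcm
    nlinarith [hsymm, hlcm, p1, p2, pm]
lemma bracket_eval (r : ℕ) (hr : 2 ≤ r) (D : ℕ → ℚ) (hD0 : ∀ m, m < r → D m = 0)
    (hD1 : D r = 1) (t s : ℕ) (hts : t + s = 2 * r - 2) :
    2 * D (t + 1) * D (s + 1) - D (t + 2) * D s - D t * D (s + 2)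
      = if t = r - 1 then 2 else if t = r - 2 ∨ t = r then -1 else 0 := by
  by_cases h1 : t = r - 1
  · have e1 : t + 1 = r := by omega
    have e2 : s + 1 = r := by omega
    rw [if_pos h1, e1, e2, hD1, hD0 s (by omega), hD0 t (by omega)]
    ring
  · by_cases h2 : t = r - 2
    · have e1 : t + 2 = r := by omega
      have e2 : s = r := by omega
      rw [if_neg h1, if_pos (Or.inl h2), e1, e2, hD1, hD0 (t + 1) (by omega),
        hD0 t (by omega)]
      ring
    · by_cases h3 : t = r
      · have e2 : s + 2 = r := by omega
        rw [if_neg h1, if_pos (Or.inr h3), h3, e2, hD1, hD0 (s + 1) (by omega),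
          hD0 s (by omega)]
        ring
      · rw [if_neg h1, if_neg (by tauto)]
        rcases lt_or_gt_of_ne (show t ≠ r from h3) with h | h
        · rw [hD0 t (by omega), hD0 (t + 1) (by omega), hD0 (t + 2) (by omega)]
          ring
        · rw [hD0 s (by omega), hD0 (s + 1) (by omega), hD0 (s + 2) (by omega)]
          ring

lemma prod_linear_symm (d : ℕ) (x y : ℚ) :
    ∏ a ∈ Finset.range (d + 1), ((a : ℚ) * x + ((d : ℚ) - a) * y)
      = ∏ a ∈ Finset.range (d + 1), ((a : ℚ) * y + ((d : ℚ) - a) * x) := by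
  rw [← Finset.prod_range_reflect]
  refine Finset.prod_congr rfl fun a ha => ?_
  have h := Finset.mem_range.mp ha
  have h2 : d + 1 - 1 - a = d - a := by omega
  rw [h2]
  push_cast [Nat.cast_sub (by omega : a ≤ d)]
  ring

lemma prod_linear_expand (d : ℕ) (x y : ℚ) :
    ∏ a ∈ Finset.range (d + 1), ((a : ℚ) * x + ((d : ℚ) - a) * y)
      = ∑ T ∈ (Finset.range (d + 1)).powerset,
          ((∏ a ∈ T, (a : ℚ)) * ∏ a ∈ Finset.range (d + 1) \ T, ((d : ℚ) - a))
            * (x ^ T.card * y ^ (Finset.range (d + 1) \ T).card) := by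
  rw [Finset.prod_add]
  refine Finset.sum_congr rfl fun T hT => ?_
  rw [Finset.prod_mul_distrib, Finset.prod_mul_distrib, Finset.prod_const,
    Finset.prod_const]
  ring

lemma range_decomp (d : ℕ) (hd : 1 ≤ d) :
    Finset.range (d + 1) = insert 0 (insert d (Finset.Ioo 0 d)) := by
  ext x
  simp only [Finset.mem_range, Finset.mem_insert, Finset.mem_Ioo]
  omega

lemma A_reduction (d t : ℕ) (hd : 1 ≤ d) :
    esum (Finset.range (d + 1)) (fun a => (a : ℚ)) (fun a => (d : ℚ) - a) (t + 1)
      = (d : ℚ) ^ 2 * esum (Finset.Ioo 0 d) (fun a => (a : ℚ)) (fun a => (d : ℚ) - a) t := by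
  have h0 : (0 : ℕ) ∉ insert d (Finset.Ioo 0 d) := by
    simp only [Finset.mem_insert, Finset.mem_Ioo]
    omega
  have hdmem : d ∉ Finset.Ioo 0 d := by simp
  rw [range_decomp d hd, esum_insert h0, esum_insert hdmem]
  rcases t with _ | t
  · rw [esum_insert_zero hdmem]
    push_cast
    ring
  · rw [esum_insert hdmem]
    push_cast
    ring
/-- For every `r ≥ 2` there is a nonnegative integer `c` (the number of lines on
a general hypersurface of degree `2r − 3` in `ℙ^r`) such that for every choice
of pairwise distinct rational numbers `λ₀, …, λ_r`, the degree-one Bott sum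
`L(2r−3; λ₀,…,λ_r)` equals `c`; in particular the sum is independent of the
choice of the pairwise distinct `λ`'s. -/
theorem bottSum1_lines_hypersurface (r : ℕ) (hr : 2 ≤ r) :
    ∃ c : ℕ, ∀ lam : Fin (r + 1) → ℚ, Function.Injective lam →
      bottSum1 [2 * r - 3] lam = c := by
  refine ⟨(2 * r - 3) ^ 2 * (nesum (2 * r - 3) (r - 2) - nesum (2 * r - 3) (r - 1)), ?_⟩
  intro lam hinj
  set d := 2 * r - 3 with hd
  have hd1 : 1 ≤ d := by omega
  set P : Fin (r + 1) → ℚ := fun i => ∏ l ∈ Finset.univ.erase i, (lam i - lam l) with hP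
  have hPne : ∀ i, P i ≠ 0 := by
    intro i
    rw [hP]
    refine Finset.prod_ne_zero_iff.mpr fun l hl => sub_ne_zero.mpr ?_
    exact fun e => (Finset.mem_erase.mp hl).1 (hinj e.symm)
  set D : ℕ → ℚ := fun m => ∑ i, lam i ^ m * (P i)⁻¹ with hDdef
  have hD0 : ∀ m, m < r → D m = 0 := by
    intro m hm
    rw [hDdef]
    simp only
    rw [divdiff lam hinj m hm.le, if_neg hm.ne]
  have hD1 : D r = 1 := by
    rw [hDdef]
    simp only
    rw [divdiff lam hinj r le_rfl, if_pos rfl]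
  have hDm : ∀ m, ∑ i, lam i ^ m * (P i)⁻¹ = D m := fun m => rfl
  -- Step A : rewrite each summand
  have stepA : bottSum1 [d] lam = ∑ i : Fin (r + 1), ∑ j : Fin (r + 1),
      (if i < j then
        (-(lam i - lam j) ^ 2
            * ∏ a ∈ Finset.range (d + 1), ((a : ℚ) * lam i + ((d : ℚ) - a) * lam j))
          * ((P i)⁻¹ * (P j)⁻¹)
      else 0) := by
    rw [bottSum1]
    refine Finset.sum_congr rfl fun i _ => Finset.sum_congr rfl fun j _ => ?_
    by_cases hij : i < j
    · rw [if_pos hij, if_pos hij]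
      have hne : i ≠ j := ne_of_lt hij
      simp only [List.map_cons, List.map_nil, List.prod_cons, List.prod_nil, mul_one]
      have hfil : Finset.univ.filter (fun l => l ≠ i ∧ l ≠ j)
          = (Finset.univ.erase i).erase j := by
        ext l
        simp only [Finset.mem_filter, Finset.mem_univ, true_and, Finset.mem_erase]
        tauto
      have hji : j ∈ Finset.univ.erase i :=
        Finset.mem_erase.mpr ⟨hne.symm, Finset.mem_univ j⟩
      have hij' : i ∈ Finset.univ.erase j :=
        Finset.mem_erase.mpr ⟨hne, Finset.mem_univ i⟩
      have h1 : (lam i - lam j)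
          * ∏ l ∈ (Finset.univ.erase i).erase j, (lam i - lam l) = P i :=
        Finset.mul_prod_erase (Finset.univ.erase i) (fun l => lam i - lam l) hji
      have h2 : (lam j - lam i)
          * ∏ l ∈ (Finset.univ.erase i).erase j, (lam j - lam l) = P j := by
        rw [Finset.erase_right_comm]
        exact Finset.mul_prod_erase (Finset.univ.erase j) (fun l => lam j - lam l) hij'
      have hij0 : lam i - lam j ≠ 0 := sub_ne_zero.mpr fun e => hne (hinj e)
      have hji0 : lam j - lam i ≠ 0 := sub_ne_zero.mpr fun e => hne (hinj e.symm)
      have hX : ∏ l ∈ (Finset.univ.erase i).erase j, (lam i - lam l) ≠ 0 := by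
        refine Finset.prod_ne_zero_iff.mpr fun l hl => sub_ne_zero.mpr ?_
        have := Finset.mem_erase.mp (Finset.mem_erase.mp hl).2
        exact fun e => this.1 (hinj e.symm)
      have hY : ∏ l ∈ (Finset.univ.erase i).erase j, (lam j - lam l) ≠ 0 := by
        refine Finset.prod_ne_zero_iff.mpr fun l hl => sub_ne_zero.mpr ?_
        have := Finset.mem_erase.mp hl
        exact fun e => this.1 (hinj e.symm)
      rw [hfil, Finset.prod_mul_distrib, show P i = (lam i - lam j)
          * ∏ l ∈ (Finset.univ.erase i).erase j, (lam i - lam l) from h1.symm,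
        show P j = (lam j - lam i)
          * ∏ l ∈ (Finset.univ.erase i).erase j, (lam j - lam l) from h2.symm]
      generalize (∏ a ∈ Finset.range (d + 1), ((a : ℚ) * lam i + ((d : ℚ) - a) * lam j)) = Q
      field_simp
      ring
    · rw [if_neg hij, if_neg hij]
  rw [stepA]
  rw [half_sum (fun i j => (-(lam i - lam j) ^ 2
      * ∏ a ∈ Finset.range (d + 1), ((a : ℚ) * lam i + ((d : ℚ) - a) * lam j))
        * ((P i)⁻¹ * (P j)⁻¹))
    (fun i j => by
      rw [prod_linear_symm]
      ring)
    (fun i => by ring)]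
  -- Step C : expand the product and swap sums
  have hG : ∀ i j : Fin (r + 1), (-(lam i - lam j) ^ 2
      * ∏ a ∈ Finset.range (d + 1), ((a : ℚ) * lam i + ((d : ℚ) - a) * lam j))
        * ((P i)⁻¹ * (P j)⁻¹)
      = ∑ T ∈ (Finset.range (d + 1)).powerset,
          ((∏ a ∈ T, (a : ℚ)) * ∏ a ∈ Finset.range (d + 1) \ T, ((d : ℚ) - a))
            * (-(lam i - lam j) ^ 2 * lam i ^ T.card
                * lam j ^ (Finset.range (d + 1) \ T).card)
            * ((P i)⁻¹ * (P j)⁻¹) := by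
    intro i j
    rw [prod_linear_expand, Finset.mul_sum, Finset.sum_mul]
    exact Finset.sum_congr rfl fun T _ => by ring
  rw [Finset.sum_congr rfl fun i _ => Finset.sum_congr rfl fun j _ => hG i j]
  rw [Finset.sum_congr rfl fun i (_ : i ∈ Finset.univ) => Finset.sum_comm]
  rw [Finset.sum_comm]
  -- Step D : evaluate the inner double sums
  have inner : ∀ T ∈ (Finset.range (d + 1)).powerset,
      (∑ i : Fin (r + 1), ∑ j : Fin (r + 1),
        ((∏ a ∈ T, (a : ℚ)) * ∏ a ∈ Finset.range (d + 1) \ T, ((d : ℚ) - a))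
          * (-(lam i - lam j) ^ 2 * lam i ^ T.card
              * lam j ^ (Finset.range (d + 1) \ T).card)
          * ((P i)⁻¹ * (P j)⁻¹))
      = ((∏ a ∈ T, (a : ℚ)) * ∏ a ∈ Finset.range (d + 1) \ T, ((d : ℚ) - a))
          * (if T.card = r - 1 then 2 else
              if T.card = r - 2 ∨ T.card = r then -1 else 0) := by
    intro T hT
    set C : ℚ := (∏ a ∈ T, (a : ℚ)) * ∏ a ∈ Finset.range (d + 1) \ T, ((d : ℚ) - a)
      with hCdef
    set t := T.card with ht
    set s := (Finset.range (d + 1) \ T).card with hs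
    have hts : t + s = 2 * r - 2 := by
      have hsub : T ⊆ Finset.range (d + 1) := Finset.mem_powerset.mp hT
      have := Finset.card_sdiff_of_subset hsub
      have hle := Finset.card_le_card hsub
      rw [Finset.card_range] at this hle
      omega
    calc ∑ i : Fin (r + 1), ∑ j : Fin (r + 1),
          C * (-(lam i - lam j) ^ 2 * lam i ^ t * lam j ^ s) * ((P i)⁻¹ * (P j)⁻¹)
        = ∑ i : Fin (r + 1), ∑ j : Fin (r + 1),
            ((2 * C) * (lam i ^ (t + 1) * (P i)⁻¹) * (lam j ^ (s + 1) * (P j)⁻¹)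
              + (-C) * (lam i ^ (t + 2) * (P i)⁻¹) * (lam j ^ s * (P j)⁻¹)
              + (-C) * (lam i ^ t * (P i)⁻¹) * (lam j ^ (s + 2) * (P j)⁻¹)) := by
          refine Finset.sum_congr rfl fun i _ => Finset.sum_congr rfl fun j _ => ?_
          ring
      _ = (2 * C) * D (t + 1) * D (s + 1) + (-C) * D (t + 2) * D s
            + (-C) * D t * D (s + 2) := by
          simp only [Finset.sum_add_distrib]
          rw [← Finset.sum_mul_sum, ← Finset.sum_mul_sum, ← Finset.sum_mul_sum]
          simp only [← Finset.mul_sum]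
          simp only [hDm]
      _ = C * (2 * D (t + 1) * D (s + 1) - D (t + 2) * D s - D t * D (s + 2)) := by
          ring
      _ = C * (if t = r - 1 then 2 else if t = r - 2 ∨ t = r then -1 else 0) := by
          rw [bracket_eval r hr D hD0 hD1 t s hts]
  rw [Finset.sum_congr rfl inner]
  
  have split : ∑ T ∈ (Finset.range (d + 1)).powerset,
      ((∏ a ∈ T, (a : ℚ)) * ∏ a ∈ Finset.range (d + 1) \ T, ((d : ℚ) - a))
        * (if T.card = r - 1 then 2 else
            if T.card = r - 2 ∨ T.card = r then -1 else 0)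
      = 2 * esum (Finset.range (d + 1)) (fun a => (a : ℚ)) (fun a => (d : ℚ) - a) (r - 1)
        - esum (Finset.range (d + 1)) (fun a => (a : ℚ)) (fun a => (d : ℚ) - a) (r - 2)
        - esum (Finset.range (d + 1)) (fun a => (a : ℚ)) (fun a => (d : ℚ) - a) r := by
    rw [esum_eq_sum_if, esum_eq_sum_if, esum_eq_sum_if, Finset.mul_sum,
      ← Finset.sum_sub_distrib, ← Finset.sum_sub_distrib]
    refine Finset.sum_congr rfl fun T hT => ?_
    by_cases h1 : T.card = r - 1
    · rw [if_pos h1, if_pos h1, if_neg (by omega), if_neg (by omega)]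
      ring
    · by_cases h2 : T.card = r - 2
      · rw [if_neg h1, if_pos (Or.inl h2), if_neg h1, if_pos h2, if_neg (by omega)]
        ring
      · by_cases h3 : T.card = r
        · rw [if_neg h1, if_pos (Or.inr h3), if_neg h1, if_neg h2, if_pos h3]
          ring
        · rw [if_neg h1, if_neg (by tauto), if_neg h1, if_neg h2, if_neg h3]
          ring
  rw [split]
  have hA1 := A_reduction d (r - 2) hd1
  rw [show r - 2 + 1 = r - 1 from by omega] at hA1
  have hAr := A_reduction d (r - 1) hd1
  rw [show r - 1 + 1 = r from by omega] at hAr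
  have hkey : nesum d (r - 1) ≤ nesum d (r - 2) := by
    have h := key_ineq (r - 2)
    rw [show 2 * (r - 2) + 1 = d from by omega, show r - 2 + 1 = r - 1 from by omega] at h
    exact h
  have hcast : ((d ^ 2 * (nesum d (r - 2) - nesum d (r - 1)) : ℕ) : ℚ)
      = (d : ℚ) ^ 2
          * (esum (Finset.Ioo 0 d) (fun a => (a : ℚ)) (fun a => (d : ℚ) - a) (r - 2)
            - esum (Finset.Ioo 0 d) (fun a => (a : ℚ)) (fun a => (d : ℚ) - a) (r - 1)) := by
    rw [Nat.cast_mul, Nat.cast_sub hkey, nesum_cast, nesum_cast]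
    push_cast
    ring
  rw [hA1, hAr, hcast]
  rcases Nat.lt_or_ge r 3 with hr3 | hr3
  · -- r = 2
    have hio : Finset.Ioo 0 d = ∅ := by
      ext x
      simp only [Finset.mem_Ioo, Finset.notMem_empty, iff_false, not_and, not_lt]
      omega
    have hA0 : esum (Finset.range (d + 1)) (fun a => (a : ℚ))
        (fun a => (d : ℚ) - a) (r - 2) = 0 := by
      rw [show r - 2 = 0 from by omega, esum_zero']
      exact Finset.prod_eq_zero (Finset.self_mem_range_succ d) (by rw [sub_self])
    rw [hA0, hio]
    rw [show r - 2 = 0 from by omega, show r - 1 = 1 from by omega]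
    simp only [esum_empty]
    norm_num
    ring
  · -- r ≥ 3
    have hA2 := A_reduction d (r - 3) hd1
    rw [show r - 3 + 1 = r - 2 from by omega] at hA2
    have hsymm := esum_symm d (r - 1) (by omega)
    rw [show d - 1 - (r - 1) = r - 3 from by omega] at hsymm
    rw [hA2, hsymm]
    ring
end

section
/- For every choice of pairwise distinct rational numbers λ_0, …, λ_4, one has Σ_{0 ≤ i < j ≤ 4} ( ∏_{a=0}^{5} (a·λ_i + (5 − a)·λ_j) ) / ( ∏_{l ∈ {0,…,4}, l∉{i,j}} (λ_i − λ_l)·(λ_j − λ_l) ) = 2875. This is the number of lines on a general quintic threefold in P^4. -/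
set_option maxHeartbeats 4000000 in
/-- For every choice of pairwise distinct rational numbers `λ₀, …, λ₄`, the
degree-one Bott sum `L(5; λ₀,…,λ₄)` equals `2875`, the number of lines on a
general quintic threefold in `ℙ⁴`. -/
theorem bottSum1_quintic (lam : Fin 5 → ℚ) (hlam : Function.Injective lam) :
    bottSum1 [5] lam = 2875 := by
  have h : ∀ i j : Fin 5, i ≠ j → lam i - lam j ≠ 0 := fun i j hij =>
    sub_ne_zero.mpr (fun e => hij (hlam e))
  have h01 := h 0 1 (by decide); have h02 := h 0 2 (by decide)
  have h03 := h 0 3 (by decide); have h04 := h 0 4 (by decide)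
  have h12 := h 1 2 (by decide); have h13 := h 1 3 (by decide)
  have h14 := h 1 4 (by decide); have h23 := h 2 3 (by decide)
  have h24 := h 2 4 (by decide); have h34 := h 3 4 (by decide)
  have h10 := h 1 0 (by decide); have h20 := h 2 0 (by decide)
  have h30 := h 3 0 (by decide); have h40 := h 4 0 (by decide)
  have h21 := h 2 1 (by decide); have h31 := h 3 1 (by decide)
  have h41 := h 4 1 (by decide); have h32 := h 3 2 (by decide)
  have h42 := h 4 2 (by decide); have h43 := h 4 3 (by decide)
  clear h
  simp (config := { maxSteps := 10000000 }) only [bottSum1, Fin.sum_univ_five,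
    Finset.prod_filter, Fin.prod_univ_five, Finset.prod_range_succ,
    Finset.prod_range_zero, List.map_cons, List.map_nil, List.prod_cons, List.prod_nil]
  simp (config := { maxSteps := 10000000, decide := true }) only [reduceIte]
  set a := lam 0; set b := lam 1; set c := lam 2; set d := lam 3; set e := lam 4
  norm_num
  have hD : (a - b) * (a - c) * (a - d) * (a - e) * (b - c) * (b - d) * (b - e) * (c - d) * (c - e) * (d - e) ≠ 0 := by apply_rules [mul_ne_zero]
  have hcab : ((a - b) * (c - d) * (c - e) * (d - e)) ≠ 0 := by apply_rules [mul_ne_zero, neg_ne_zero.mpr]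
  have eqab : 5 * b * (a + 4 * b) * (2 * a + 3 * b) * (3 * a + 2 * b) * (4 * a + b) * (5 * a) /
      ((a - c) * (b - c) * ((a - d) * (b - d)) * ((a - e) * (b - e))) =
      (5 * b * (a + 4 * b) * (2 * a + 3 * b) * (3 * a + 2 * b) * (4 * a + b) * (5 * a)) * ((a - b) * (c - d) * (c - e) * (d - e)) /
      ((a - b) * (a - c) * (a - d) * (a - e) * (b - c) * (b - d) * (b - e) * (c - d) * (c - e) * (d - e)) := by
    rw [show ((a - b) * (a - c) * (a - d) * (a - e) * (b - c) * (b - d) * (b - e) * (c - d) * (c - e) * (d - e) : ℚ) =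
        ((a - c) * (b - c) * ((a - d) * (b - d)) * ((a - e) * (b - e))) * ((a - b) * (c - d) * (c - e) * (d - e)) from by ring]
    exact (mul_div_mul_right _ _ hcab).symm
  have hcac : (-((a - c) * (b - d) * (b - e) * (d - e))) ≠ 0 := by apply_rules [mul_ne_zero, neg_ne_zero.mpr]
  have eqac : 5 * c * (a + 4 * c) * (2 * a + 3 * c) * (3 * a + 2 * c) * (4 * a + c) * (5 * a) /
      ((a - b) * (c - b) * ((a - d) * (c - d)) * ((a - e) * (c - e))) =
      (5 * c * (a + 4 * c) * (2 * a + 3 * c) * (3 * a + 2 * c) * (4 * a + c) * (5 * a)) * (-((a - c) * (b - d) * (b - e) * (d - e))) /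
      ((a - b) * (a - c) * (a - d) * (a - e) * (b - c) * (b - d) * (b - e) * (c - d) * (c - e) * (d - e)) := by
    rw [show ((a - b) * (a - c) * (a - d) * (a - e) * (b - c) * (b - d) * (b - e) * (c - d) * (c - e) * (d - e) : ℚ) =
        ((a - b) * (c - b) * ((a - d) * (c - d)) * ((a - e) * (c - e))) * (-((a - c) * (b - d) * (b - e) * (d - e))) from by ring]
    exact (mul_div_mul_right _ _ hcac).symm
  have hcad : ((a - d) * (b - c) * (b - e) * (c - e)) ≠ 0 := by apply_rules [mul_ne_zero, neg_ne_zero.mpr]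
  have eqad : 5 * d * (a + 4 * d) * (2 * a + 3 * d) * (3 * a + 2 * d) * (4 * a + d) * (5 * a) /
      ((a - b) * (d - b) * ((a - c) * (d - c)) * ((a - e) * (d - e))) =
      (5 * d * (a + 4 * d) * (2 * a + 3 * d) * (3 * a + 2 * d) * (4 * a + d) * (5 * a)) * ((a - d) * (b - c) * (b - e) * (c - e)) /
      ((a - b) * (a - c) * (a - d) * (a - e) * (b - c) * (b - d) * (b - e) * (c - d) * (c - e) * (d - e)) := by
    rw [show ((a - b) * (a - c) * (a - d) * (a - e) * (b - c) * (b - d) * (b - e) * (c - d) * (c - e) * (d - e) : ℚ) =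
        ((a - b) * (d - b) * ((a - c) * (d - c)) * ((a - e) * (d - e))) * ((a - d) * (b - c) * (b - e) * (c - e)) from by ring]
    exact (mul_div_mul_right _ _ hcad).symm
  have hcae : (-((a - e) * (b - c) * (b - d) * (c - d))) ≠ 0 := by apply_rules [mul_ne_zero, neg_ne_zero.mpr]
  have eqae : 5 * e * (a + 4 * e) * (2 * a + 3 * e) * (3 * a + 2 * e) * (4 * a + e) * (5 * a) /
      ((a - b) * (e - b) * ((a - c) * (e - c)) * ((a - d) * (e - d))) =
      (5 * e * (a + 4 * e) * (2 * a + 3 * e) * (3 * a + 2 * e) * (4 * a + e) * (5 * a)) * (-((a - e) * (b - c) * (b - d) * (c - d))) /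
      ((a - b) * (a - c) * (a - d) * (a - e) * (b - c) * (b - d) * (b - e) * (c - d) * (c - e) * (d - e)) := by
    rw [show ((a - b) * (a - c) * (a - d) * (a - e) * (b - c) * (b - d) * (b - e) * (c - d) * (c - e) * (d - e) : ℚ) =
        ((a - b) * (e - b) * ((a - c) * (e - c)) * ((a - d) * (e - d))) * (-((a - e) * (b - c) * (b - d) * (c - d))) from by ring]
    exact (mul_div_mul_right _ _ hcae).symm
  have hcbc : ((a - d) * (a - e) * (b - c) * (d - e)) ≠ 0 := by apply_rules [mul_ne_zero, neg_ne_zero.mpr]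
  have eqbc : 5 * c * (b + 4 * c) * (2 * b + 3 * c) * (3 * b + 2 * c) * (4 * b + c) * (5 * b) /
      ((b - a) * (c - a) * ((b - d) * (c - d)) * ((b - e) * (c - e))) =
      (5 * c * (b + 4 * c) * (2 * b + 3 * c) * (3 * b + 2 * c) * (4 * b + c) * (5 * b)) * ((a - d) * (a - e) * (b - c) * (d - e)) /
      ((a - b) * (a - c) * (a - d) * (a - e) * (b - c) * (b - d) * (b - e) * (c - d) * (c - e) * (d - e)) := by
    rw [show ((a - b) * (a - c) * (a - d) * (a - e) * (b - c) * (b - d) * (b - e) * (c - d) * (c - e) * (d - e) : ℚ) =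
        ((b - a) * (c - a) * ((b - d) * (c - d)) * ((b - e) * (c - e))) * ((a - d) * (a - e) * (b - c) * (d - e)) from by ring]
    exact (mul_div_mul_right _ _ hcbc).symm
  have hcbd : (-((a - c) * (a - e) * (b - d) * (c - e))) ≠ 0 := by apply_rules [mul_ne_zero, neg_ne_zero.mpr]
  have eqbd : 5 * d * (b + 4 * d) * (2 * b + 3 * d) * (3 * b + 2 * d) * (4 * b + d) * (5 * b) /
      ((b - a) * (d - a) * ((b - c) * (d - c)) * ((b - e) * (d - e))) =
      (5 * d * (b + 4 * d) * (2 * b + 3 * d) * (3 * b + 2 * d) * (4 * b + d) * (5 * b)) * (-((a - c) * (a - e) * (b - d) * (c - e))) /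
      ((a - b) * (a - c) * (a - d) * (a - e) * (b - c) * (b - d) * (b - e) * (c - d) * (c - e) * (d - e)) := by
    rw [show ((a - b) * (a - c) * (a - d) * (a - e) * (b - c) * (b - d) * (b - e) * (c - d) * (c - e) * (d - e) : ℚ) =
        ((b - a) * (d - a) * ((b - c) * (d - c)) * ((b - e) * (d - e))) * (-((a - c) * (a - e) * (b - d) * (c - e))) from by ring]
    exact (mul_div_mul_right _ _ hcbd).symm
  have hcbe : ((a - c) * (a - d) * (b - e) * (c - d)) ≠ 0 := by apply_rules [mul_ne_zero, neg_ne_zero.mpr]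
  have eqbe : 5 * e * (b + 4 * e) * (2 * b + 3 * e) * (3 * b + 2 * e) * (4 * b + e) * (5 * b) /
      ((b - a) * (e - a) * ((b - c) * (e - c)) * ((b - d) * (e - d))) =
      (5 * e * (b + 4 * e) * (2 * b + 3 * e) * (3 * b + 2 * e) * (4 * b + e) * (5 * b)) * ((a - c) * (a - d) * (b - e) * (c - d)) /
      ((a - b) * (a - c) * (a - d) * (a - e) * (b - c) * (b - d) * (b - e) * (c - d) * (c - e) * (d - e)) := by
    rw [show ((a - b) * (a - c) * (a - d) * (a - e) * (b - c) * (b - d) * (b - e) * (c - d) * (c - e) * (d - e) : ℚ) =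
        ((b - a) * (e - a) * ((b - c) * (e - c)) * ((b - d) * (e - d))) * ((a - c) * (a - d) * (b - e) * (c - d)) from by ring]
    exact (mul_div_mul_right _ _ hcbe).symm
  have hccd : ((a - b) * (a - e) * (b - e) * (c - d)) ≠ 0 := by apply_rules [mul_ne_zero, neg_ne_zero.mpr]
  have eqcd : 5 * d * (c + 4 * d) * (2 * c + 3 * d) * (3 * c + 2 * d) * (4 * c + d) * (5 * c) /
      ((c - a) * (d - a) * ((c - b) * (d - b)) * ((c - e) * (d - e))) =
      (5 * d * (c + 4 * d) * (2 * c + 3 * d) * (3 * c + 2 * d) * (4 * c + d) * (5 * c)) * ((a - b) * (a - e) * (b - e) * (c - d)) /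
      ((a - b) * (a - c) * (a - d) * (a - e) * (b - c) * (b - d) * (b - e) * (c - d) * (c - e) * (d - e)) := by
    rw [show ((a - b) * (a - c) * (a - d) * (a - e) * (b - c) * (b - d) * (b - e) * (c - d) * (c - e) * (d - e) : ℚ) =
        ((c - a) * (d - a) * ((c - b) * (d - b)) * ((c - e) * (d - e))) * ((a - b) * (a - e) * (b - e) * (c - d)) from by ring]
    exact (mul_div_mul_right _ _ hccd).symm
  have hcce : (-((a - b) * (a - d) * (b - d) * (c - e))) ≠ 0 := by apply_rules [mul_ne_zero, neg_ne_zero.mpr]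
  have eqce : 5 * e * (c + 4 * e) * (2 * c + 3 * e) * (3 * c + 2 * e) * (4 * c + e) * (5 * c) /
      ((c - a) * (e - a) * ((c - b) * (e - b)) * ((c - d) * (e - d))) =
      (5 * e * (c + 4 * e) * (2 * c + 3 * e) * (3 * c + 2 * e) * (4 * c + e) * (5 * c)) * (-((a - b) * (a - d) * (b - d) * (c - e))) /
      ((a - b) * (a - c) * (a - d) * (a - e) * (b - c) * (b - d) * (b - e) * (c - d) * (c - e) * (d - e)) := by
    rw [show ((a - b) * (a - c) * (a - d) * (a - e) * (b - c) * (b - d) * (b - e) * (c - d) * (c - e) * (d - e) : ℚ) =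
        ((c - a) * (e - a) * ((c - b) * (e - b)) * ((c - d) * (e - d))) * (-((a - b) * (a - d) * (b - d) * (c - e))) from by ring]
    exact (mul_div_mul_right _ _ hcce).symm
  have hcde : ((a - b) * (a - c) * (b - c) * (d - e)) ≠ 0 := by apply_rules [mul_ne_zero, neg_ne_zero.mpr]
  have eqde : 5 * e * (d + 4 * e) * (2 * d + 3 * e) * (3 * d + 2 * e) * (4 * d + e) * (5 * d) /
      ((d - a) * (e - a) * ((d - b) * (e - b)) * ((d - c) * (e - c))) =
      (5 * e * (d + 4 * e) * (2 * d + 3 * e) * (3 * d + 2 * e) * (4 * d + e) * (5 * d)) * ((a - b) * (a - c) * (b - c) * (d - e)) /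
      ((a - b) * (a - c) * (a - d) * (a - e) * (b - c) * (b - d) * (b - e) * (c - d) * (c - e) * (d - e)) := by
    rw [show ((a - b) * (a - c) * (a - d) * (a - e) * (b - c) * (b - d) * (b - e) * (c - d) * (c - e) * (d - e) : ℚ) =
        ((d - a) * (e - a) * ((d - b) * (e - b)) * ((d - c) * (e - c))) * ((a - b) * (a - c) * (b - c) * (d - e)) from by ring]
    exact (mul_div_mul_right _ _ hcde).symm
  rw [eqab, eqac, eqad, eqae, eqbc, eqbd, eqbe, eqcd, eqce, eqde]
  simp only [← add_div]
  rw [div_eq_iff hD]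
  ring
end

section
/- For every choice of pairwise distinct rational numbers λ_0, …, λ_5, one has Σ_{0 ≤ i < j ≤ 5} ( ∏_{a=0}^{4} (a·λ_i + (4 − a)·λ_j) · ∏_{a=0}^{2} (a·λ_i + (2 − a)·λ_j) ) / ( ∏_{l ∈ {0,…,5}, l∉{i,j}} (λ_i − λ_l)·(λ_j − λ_l) ) = 1280. This is the number of lines on a general complete intersection Calabi–Yau threefold of type (4,2) in P^5. -/
open Finset Polynomial

lemma powSum6 (p : ℕ) (hp : p ≤ 5) (lam : Fin 6 → ℚ) (hlam : Function.Injective lam) :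
    ∑ i : Fin 6, lam i ^ p / ∏ l ∈ Finset.univ.erase i, (lam i - lam l)
      = if p = 5 then 1 else 0 := by
  have hvs : Set.InjOn lam (Finset.univ : Finset (Fin 6)) := fun a _ b _ h => hlam h
  have hcard : (Finset.univ : Finset (Fin 6)).card = 6 := by simp
  have hdeg : (X ^ p : ℚ[X]).degree < ((Finset.univ : Finset (Fin 6)).card : ℕ) := by
    rw [degree_X_pow, hcard]
    exact_mod_cast Nat.lt_of_le_of_lt hp (by norm_num)
  have h := Lagrange.eq_interpolate (s := Finset.univ) (v := lam) (f := X ^ p) hvs hdeg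
  have hc := congrArg (fun q : ℚ[X] => q.coeff 5) h
  simp only [Lagrange.interpolate_apply, Polynomial.finset_sum_coeff, coeff_C_mul,
    eval_pow, eval_X, coeff_X_pow] at hc
  have hbasis : ∀ i : Fin 6, (Lagrange.basis Finset.univ lam i).coeff 5
      = ∏ l ∈ Finset.univ.erase i, (lam i - lam l)⁻¹ := by
    intro i
    have hnd : (Lagrange.basis Finset.univ lam i).natDegree = 5 := by
      rw [Lagrange.natDegree_basis hvs (mem_univ i), hcard]
    rw [← hnd, ← Polynomial.leadingCoeff, Lagrange.basis, leadingCoeff_prod]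
    refine Finset.prod_congr rfl fun l hl => ?_
    have hne : lam i ≠ lam l := fun h => (Finset.mem_erase.mp hl).1 (hlam h).symm
    rw [Lagrange.basisDivisor, leadingCoeff_mul, leadingCoeff_C, leadingCoeff_X_sub_C, mul_one]
  simp only [hbasis] at hc
  have : ∑ i : Fin 6, lam i ^ p / ∏ l ∈ Finset.univ.erase i, (lam i - lam l)
      = ∑ x : Fin 6, lam x ^ p * ∏ l ∈ Finset.univ.erase x, (lam x - lam l)⁻¹ :=
    Finset.sum_congr rfl fun i _ => by
      rw [div_eq_mul_inv, ← Finset.prod_inv_distrib]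
  rw [this, ← hc]
  simp [eq_comm]


/-- For every choice of pairwise distinct rational numbers `λ₀, …, λ₅`, the
degree-one Bott sum `L(4,2; λ₀,…,λ₅)` equals `1280`, the number of lines on a
general complete intersection Calabi–Yau threefold of type `(4,2)` in `ℙ⁵`. -/
theorem bottSum1_4_2 (lam : Fin 6 → ℚ) (hlam : Function.Injective lam) :
    bottSum1 [4, 2] lam = 1280 := by
  classical
  set A : Fin 6 → ℚ := fun i => ∏ l ∈ Finset.univ.erase i, (lam i - lam l) with hA
  have hA0 : ∀ i, A i ≠ 0 := by
    intro i
    rw [hA]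
    refine Finset.prod_ne_zero_iff.mpr fun l hl => sub_ne_zero_of_ne fun h => ?_
    exact (Finset.mem_erase.mp hl).1 (hlam h).symm
  set u : Fin 6 → ℕ → ℚ := fun i p => lam i ^ p / A i with hu
  set g : Fin 6 → Fin 6 → ℚ := fun i j =>
    (-384) * u i 2 * u j 8 + (-1280) * u i 3 * u j 7 + 384 * u i 4 * u j 6
    + 2560 * u i 5 * u j 5 + 384 * u i 6 * u j 4 + (-1280) * u i 7 * u j 3
    + (-384) * u i 8 * u j 2 with hg
  -- the general algebraic identity
  have galg : ∀ x y a b : ℚ, a ≠ 0 → b ≠ 0 →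
      (-384) * (x^2/a) * (y^8/b) + (-1280) * (x^3/a) * (y^7/b) + 384 * (x^4/a) * (y^6/b)
      + 2560 * (x^5/a) * (y^5/b) + 384 * (x^6/a) * (y^4/b) + (-1280) * (x^7/a) * (y^3/b)
      + (-384) * (x^8/a) * (y^2/b)
      = (-(x-y)^2 * ((∏ c ∈ Finset.range 5, ((c:ℚ) * x + ((4:ℚ) - c) * y)) *
          (∏ c ∈ Finset.range 3, ((c:ℚ) * x + ((2:ℚ) - c) * y)))) / (a*b) := by
    intro x y a b ha hb
    simp only [Finset.prod_range_succ, Finset.prod_range_zero, one_mul]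
    push_cast
    field_simp
    ring
  -- symmetry of g
  have hgsymm : ∀ i j, g i j = g j i := by intro i j; rw [hg]; ring
  -- diagonal vanishes
  have hgdiag : ∀ i, g i i = 0 := by
    intro i
    have h0 := galg (lam i) (lam i) (A i) (A i) (hA0 i) (hA0 i)
    rw [hg]
    simp only [hu]
    rw [h0]
    simp
  -- per-pair identity
  have hterm : ∀ i j : Fin 6, i < j →
      (([4, 2].map (fun d => ∏ a ∈ Finset.range (d + 1),
        ((a : ℚ) * lam i + ((d : ℚ) - (a : ℚ)) * lam j))).prod /
      ∏ l ∈ Finset.univ.filter (fun l => l ≠ i ∧ l ≠ j),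
        ((lam i - lam l) * (lam j - lam l))) = g i j := by
    intro i j hij
    have hne : i ≠ j := ne_of_lt hij
    have hdij : lam i - lam j ≠ 0 := sub_ne_zero_of_ne fun h => hne (hlam h)
    have hdji : lam j - lam i ≠ 0 := sub_ne_zero_of_ne fun h => hne.symm (hlam h)
    have hfilter : (Finset.univ.filter (fun l => l ≠ i ∧ l ≠ j) : Finset (Fin 6))
        = (Finset.univ.erase j).erase i := by
      ext l; simp [and_comm]
    have hAi : A i = (lam i - lam j) * ∏ l ∈ (Finset.univ.erase j).erase i, (lam i - lam l) := by
      simp only [hA]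
      rw [← Finset.mul_prod_erase (Finset.univ.erase i) _
        (Finset.mem_erase.mpr ⟨hne.symm, Finset.mem_univ j⟩), Finset.erase_right_comm]
    have hAj : A j = (lam j - lam i) * ∏ l ∈ (Finset.univ.erase j).erase i, (lam j - lam l) := by
      simp only [hA]
      rw [← Finset.mul_prod_erase (Finset.univ.erase j) _
        (Finset.mem_erase.mpr ⟨hne, Finset.mem_univ i⟩)]
    have hprod : ∏ l ∈ Finset.univ.filter (fun l => l ≠ i ∧ l ≠ j),
        ((lam i - lam l) * (lam j - lam l))
        = (∏ l ∈ (Finset.univ.erase j).erase i, (lam i - lam l)) *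
          (∏ l ∈ (Finset.univ.erase j).erase i, (lam j - lam l)) := by
      rw [hfilter, Finset.prod_mul_distrib]
    have hAB : A i * A j = ((lam i - lam j) * (lam j - lam i)) *
        ∏ l ∈ Finset.univ.filter (fun l => l ≠ i ∧ l ≠ j),
          ((lam i - lam l) * (lam j - lam l)) := by
      rw [hAi, hAj, hprod]; ring
    have hkey := galg (lam i) (lam j) (A i) (A j) (hA0 i) (hA0 j)
    rw [hg]
    simp only [hu]
    rw [hkey, hAB]
    have hFnum : ([4, 2].map (fun d => ∏ a ∈ Finset.range (d + 1),
        ((a : ℚ) * lam i + ((d : ℚ) - (a : ℚ)) * lam j))).prod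
        = (∏ c ∈ Finset.range 5, ((c:ℚ) * lam i + ((4:ℚ) - c) * lam j)) *
          (∏ c ∈ Finset.range 3, ((c:ℚ) * lam i + ((2:ℚ) - c) * lam j)) := by
      simp
    rw [hFnum]
    rw [show (-(lam i - lam j)^2 : ℚ) = (lam i - lam j) * (lam j - lam i) by ring]
    exact (mul_div_mul_left _ _ (mul_ne_zero hdij hdji)).symm
  -- the power sums
  have hT : ∀ p : ℕ, p ≤ 5 → (∑ j : Fin 6, u j p) = if p = 5 then 1 else 0 := by
    intro p hp
    simpa [hu, hA] using powSum6 p hp lam hlam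
  have hlin : ∀ (c : ℚ) (p q : ℕ), (∑ i : Fin 6, ∑ j : Fin 6, c * u i p * u j q)
      = c * ((∑ i : Fin 6, u i p) * (∑ j : Fin 6, u j q)) := by
    intro c p q
    rw [Finset.sum_mul_sum, Finset.mul_sum]
    exact Finset.sum_congr rfl fun i _ => by
      rw [Finset.mul_sum]
      exact Finset.sum_congr rfl fun j _ => by ring
  -- expanding the double sum
  have hdouble : ∑ i : Fin 6, ∑ j : Fin 6, g i j
      = (-384) * ((∑ i : Fin 6, u i 2) * (∑ j : Fin 6, u j 8))
      + (-1280) * ((∑ i : Fin 6, u i 3) * (∑ j : Fin 6, u j 7))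
      + 384 * ((∑ i : Fin 6, u i 4) * (∑ j : Fin 6, u j 6))
      + 2560 * ((∑ i : Fin 6, u i 5) * (∑ j : Fin 6, u j 5))
      + 384 * ((∑ i : Fin 6, u i 6) * (∑ j : Fin 6, u j 4))
      + (-1280) * ((∑ i : Fin 6, u i 7) * (∑ j : Fin 6, u j 3))
      + (-384) * ((∑ i : Fin 6, u i 8) * (∑ j : Fin 6, u j 2)) := by
    calc ∑ i : Fin 6, ∑ j : Fin 6, g i j
        = ∑ i : Fin 6, ∑ j : Fin 6, ((-384) * u i 2 * u j 8 + (-1280) * u i 3 * u j 7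
          + 384 * u i 4 * u j 6 + 2560 * u i 5 * u j 5 + 384 * u i 6 * u j 4
          + (-1280) * u i 7 * u j 3 + (-384) * u i 8 * u j 2) := by rw [hg]
      _ = (∑ i : Fin 6, ∑ j : Fin 6, (-384) * u i 2 * u j 8)
          + (∑ i : Fin 6, ∑ j : Fin 6, (-1280) * u i 3 * u j 7)
          + (∑ i : Fin 6, ∑ j : Fin 6, 384 * u i 4 * u j 6)
          + (∑ i : Fin 6, ∑ j : Fin 6, 2560 * u i 5 * u j 5)
          + (∑ i : Fin 6, ∑ j : Fin 6, 384 * u i 6 * u j 4)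
          + (∑ i : Fin 6, ∑ j : Fin 6, (-1280) * u i 7 * u j 3)
          + (∑ i : Fin 6, ∑ j : Fin 6, (-384) * u i 8 * u j 2) := by
            simp only [Finset.sum_add_distrib]
      _ = _ := by rw [hlin, hlin, hlin, hlin, hlin, hlin, hlin]
  have hval : ∑ i : Fin 6, ∑ j : Fin 6, g i j = 2560 := by
    rw [hdouble, hT 2 (by norm_num), hT 3 (by norm_num), hT 4 (by norm_num),
      hT 5 (by norm_num)]
    norm_num
  -- splitting by trichotomy
  have htrich : ∀ i j : Fin 6, g i j
      = (if i < j then g i j else 0) + (if j < i then g i j else 0)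
        + (if i = j then g i j else 0) := by
    intro i j
    rcases lt_trichotomy i j with h | h | h
    · simp [h, asymm h, ne_of_lt h]
    · simp [h, lt_irrefl]
    · simp [h, asymm h, (ne_of_lt h).symm]
  have hdiag : ∑ i : Fin 6, ∑ j : Fin 6, (if i = j then g i j else 0) = 0 := by
    refine Finset.sum_eq_zero fun i _ => ?_
    rw [Finset.sum_ite_eq (Finset.univ : Finset (Fin 6)) i (g i)]
    simp [hgdiag i]
  have hswap : ∑ i : Fin 6, ∑ j : Fin 6, (if j < i then g i j else 0)
      = ∑ i : Fin 6, ∑ j : Fin 6, (if i < j then g i j else 0) := by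
    rw [Finset.sum_comm]
    exact Finset.sum_congr rfl fun i _ => Finset.sum_congr rfl fun j _ => by
      rw [hgsymm j i]
  have hsplit : (2560 : ℚ) = 2 * ∑ i : Fin 6, ∑ j : Fin 6, (if i < j then g i j else 0) := by
    rw [← hval]
    calc ∑ i : Fin 6, ∑ j : Fin 6, g i j
        = ∑ i : Fin 6, ∑ j : Fin 6, ((if i < j then g i j else 0)
          + (if j < i then g i j else 0) + (if i = j then g i j else 0)) := by
          exact Finset.sum_congr rfl fun i _ => Finset.sum_congr rfl fun j _ => htrich i j
      _ = 2 * ∑ i : Fin 6, ∑ j : Fin 6, (if i < j then g i j else 0) := by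
          simp only [Finset.sum_add_distrib]
          rw [hswap, hdiag]
          ring
  have hbott : bottSum1 [4, 2] lam = ∑ i : Fin 6, ∑ j : Fin 6, (if i < j then g i j else 0) := by
    rw [bottSum1]
    refine Finset.sum_congr rfl fun i _ => Finset.sum_congr rfl fun j _ => ?_
    by_cases h : i < j
    · simp only [h, if_true]
      exact hterm i j h
    · simp [h]
  rw [hbott]
  linarith [hsplit]
end

section
/- For every choice of pairwise distinct rational numbers λ_0, …, λ_6, one has Σ_{0 ≤ i < j ≤ 6} ( ∏_{a=0}^{3} (a·λ_i + (3 − a)·λ_j) · ( ∏_{a=0}^{2} (a·λ_i + (2 − a)·λ_j) )^2 ) / ( ∏_{l ∈ {0,…,6}, l∉{i,j}} (λ_i − λ_l)·(λ_j − λ_l) ) = 720. This is the number of lines on a general complete intersection Calabi–Yau threefold of type (3,2,2) in P^6. -/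
set_option maxHeartbeats 2000000


private def Pd (lam : Fin 7 → ℚ) (i : Fin 7) : ℚ :=
  ∏ l ∈ Finset.univ.erase i, (lam i - lam l)

private lemma Pd_ne_zero (lam : Fin 7 → ℚ) (hlam : Function.Injective lam) (i : Fin 7) :
    Pd lam i ≠ 0 := by
  unfold Pd
  refine Finset.prod_ne_zero_iff.mpr fun l hl => sub_ne_zero_of_ne fun h => ?_
  exact (Finset.mem_erase.mp hl).1 (hlam h).symm

private def Fv (lam : Fin 7 → ℚ) (i j : Fin 7) : ℚ :=
  -((3 * lam j) * (lam i + 2 * lam j) * (2 * lam i + lam j) * (3 * lam i) *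
    ((2 * lam j) * (lam i + lam j) * (2 * lam i))^2 * (lam i - lam j)^2)

private def gg (lam : Fin 7 → ℚ) (i j : Fin 7) : ℚ :=
  Fv lam i j / (Pd lam i * Pd lam j)

private lemma PP_eq (lam : Fin 7 → ℚ) {i j : Fin 7} (hij : i ≠ j) :
    Pd lam i * Pd lam j = -(lam i - lam j)^2 *
      ∏ l ∈ Finset.univ.filter (fun l => l ≠ i ∧ l ≠ j),
        ((lam i - lam l) * (lam j - lam l)) := by
  have hfil : Finset.univ.filter (fun l => l ≠ i ∧ l ≠ j)
      = (Finset.univ.erase i).erase j := by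
    ext l; simp [Finset.mem_erase, Finset.mem_filter, and_comm]
  have h1 : Pd lam i = (lam i - lam j) *
      ∏ l ∈ (Finset.univ.erase i).erase j, (lam i - lam l) := by
    unfold Pd
    exact (Finset.mul_prod_erase _ _
      (Finset.mem_erase.mpr ⟨hij.symm, Finset.mem_univ j⟩)).symm
  have h2 : Pd lam j = (lam j - lam i) *
      ∏ l ∈ (Finset.univ.erase i).erase j, (lam j - lam l) := by
    unfold Pd
    rw [Finset.erase_right_comm]
    exact (Finset.mul_prod_erase _ _
      (Finset.mem_erase.mpr ⟨hij, Finset.mem_univ i⟩)).symm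
  rw [hfil, Finset.prod_mul_distrib, h1, h2]
  ring

open Polynomial in
private lemma lag7 (lam : Fin 7 → ℚ) (hlam : Function.Injective lam)
    (c0 c1 c2 c3 c4 c5 c6 : ℚ) :
    ∑ i : Fin 7, (c0 + c1 * lam i + c2 * lam i ^ 2 + c3 * lam i ^ 3 + c4 * lam i ^ 4
      + c5 * lam i ^ 5 + c6 * lam i ^ 6) / Pd lam i = c6 := by
  classical
  have hv : Set.InjOn lam ↑(Finset.univ : Finset (Fin 7)) := fun a _ b _ h => hlam h
  set f : ℚ[X] := C c0 + C c1 * X + C c2 * X ^ 2 + C c3 * X ^ 3 + C c4 * X ^ 4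
      + C c5 * X ^ 5 + C c6 * X ^ 6 with hf
  have hdeg : f.degree < ((Finset.univ : Finset (Fin 7)).card : WithBot ℕ) := by
    rw [show (Finset.univ : Finset (Fin 7)).card = 7 from by simp]
    have h6 : f.degree ≤ 6 := by rw [hf]; compute_degree
    exact lt_of_le_of_lt h6 (by exact_mod_cast (by norm_num : (6:ℕ) < 7))
  have heval : ∀ x : ℚ, f.eval x = c0 + c1 * x + c2 * x ^ 2 + c3 * x ^ 3 + c4 * x ^ 4
      + c5 * x ^ 5 + c6 * x ^ 6 := by
    intro x; rw [hf]; simp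
  have hcoeff : f.coeff 6 = c6 := by
    rw [hf]
    simp [coeff_add, coeff_C_mul, coeff_X_pow, coeff_C, coeff_X]
  have hbasis : ∀ i : Fin 7, (Lagrange.basis Finset.univ lam i).coeff 6 = (Pd lam i)⁻¹ := by
    intro i
    have h1 : (Lagrange.basis Finset.univ lam i).natDegree = 6 := by
      rw [Lagrange.natDegree_basis hv (Finset.mem_univ i)]; rfl
    rw [← h1, coeff_natDegree, Lagrange.basis, leadingCoeff_prod]
    unfold Pd
    rw [← Finset.prod_inv_distrib]
    refine Finset.prod_congr rfl fun l _ => ?_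
    rw [Lagrange.basisDivisor, leadingCoeff_mul, leadingCoeff_C,
      (monic_X_sub_C (lam l)).leadingCoeff, mul_one]
  have hI := Lagrange.eq_interpolate hv hdeg
  calc ∑ i : Fin 7, (c0 + c1 * lam i + c2 * lam i ^ 2 + c3 * lam i ^ 3 + c4 * lam i ^ 4
      + c5 * lam i ^ 5 + c6 * lam i ^ 6) / Pd lam i
      = ∑ i : Fin 7, f.eval (lam i) * (Lagrange.basis Finset.univ lam i).coeff 6 := by
        refine Finset.sum_congr rfl fun i _ => ?_
        rw [hbasis i, ← heval (lam i), div_eq_mul_inv]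
    _ = (Lagrange.interpolate Finset.univ lam fun i => f.eval (lam i)).coeff 6 := by
        rw [Lagrange.interpolate_apply, Polynomial.finset_sum_coeff]
        exact (Finset.sum_congr rfl fun i _ => by rw [coeff_C_mul]).symm
    _ = f.coeff 6 := by rw [← hI]
    _ = c6 := hcoeff

private lemma gg_symm (lam : Fin 7 → ℚ) (i j : Fin 7) : gg lam i j = gg lam j i := by
  unfold gg
  rw [mul_comm (Pd lam j) (Pd lam i)]
  congr 1
  unfold Fv
  ring

private lemma gg_diag (lam : Fin 7 → ℚ) (i : Fin 7) : gg lam i i = 0 := by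
  unfold gg
  rw [show Fv lam i i = 0 from by unfold Fv; ring, zero_div]

private lemma step_A (lam : Fin 7 → ℚ) (hlam : Function.Injective lam) :
    bottSum1 [3, 2, 2] lam = ∑ i : Fin 7, ∑ j : Fin 7, if i < j then gg lam i j else 0 := by
  unfold bottSum1
  refine Finset.sum_congr rfl fun i _ => Finset.sum_congr rfl fun j _ => ?_
  by_cases hij : i < j
  · simp only [if_pos hij]
    have hne : i ≠ j := ne_of_lt hij
    have hDne : (∏ l ∈ Finset.univ.filter (fun l => l ≠ i ∧ l ≠ j),
        ((lam i - lam l) * (lam j - lam l))) ≠ 0 := by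
      refine Finset.prod_ne_zero_iff.mpr fun l hl => ?_
      have hl' := Finset.mem_filter.mp hl
      exact mul_ne_zero (sub_ne_zero_of_ne fun h => hl'.2.1 (hlam h).symm)
        (sub_ne_zero_of_ne fun h => hl'.2.2 (hlam h).symm)
    unfold gg
    rw [div_eq_div_iff hDne (mul_ne_zero (Pd_ne_zero lam hlam i) (Pd_ne_zero lam hlam j)),
      PP_eq lam hne]
    unfold Fv
    simp only [List.map_cons, List.map_nil, List.prod_cons, List.prod_nil,
      Finset.prod_range_succ, Finset.prod_range_zero]
    push_cast
    ring
  · simp only [if_neg hij]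

/-- For every choice of pairwise distinct rational numbers `λ₀, …, λ₆`, the
degree-one Bott sum `L(3,2,2; λ₀,…,λ₆)` equals `720`, the number of lines on a
general complete intersection Calabi–Yau threefold of type `(3,2,2)` in `ℙ⁶`. -/
theorem bottSum1_3_2_2 (lam : Fin 7 → ℚ) (hlam : Function.Injective lam) :
    bottSum1 [3, 2, 2] lam = 720 := by
  classical
  obtain ⟨e1, he1⟩ : ∃ a : ℚ, a = lam 0 + lam 1 + lam 2 + lam 3 + lam 4 + lam 5 + lam 6 := ⟨_, rfl⟩
  obtain ⟨e2, he2⟩ : ∃ a : ℚ, a = lam 0*lam 1 + lam 0*lam 2 + lam 0*lam 3 + lam 0*lam 4 + lam 0*lam 5 + lam 0*lam 6 + lam 1*lam 2 + lam 1*lam 3 + lam 1*lam 4 + lam 1*lam 5 + lam 1*lam 6 + lam 2*lam 3 + lam 2*lam 4 + lam 2*lam 5 + lam 2*lam 6 + lam 3*lam 4 + lam 3*lam 5 + lam 3*lam 6 + lam 4*lam 5 + lam 4*lam 6 + lam 5*lam 6 := ⟨_, rfl⟩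
  obtain ⟨e3, he3⟩ : ∃ a : ℚ, a = lam 0*lam 1*lam 2 + lam 0*lam 1*lam 3 + lam 0*lam 1*lam 4 + lam 0*lam 1*lam 5 + lam 0*lam 1*lam 6 + lam 0*lam 2*lam 3 + lam 0*lam 2*lam 4 + lam 0*lam 2*lam 5 + lam 0*lam 2*lam 6 + lam 0*lam 3*lam 4 + lam 0*lam 3*lam 5 + lam 0*lam 3*lam 6 + lam 0*lam 4*lam 5 + lam 0*lam 4*lam 6 + lam 0*lam 5*lam 6 + lam 1*lam 2*lam 3 + lam 1*lam 2*lam 4 + lam 1*lam 2*lam 5 + lam 1*lam 2*lam 6 + lam 1*lam 3*lam 4 + lam 1*lam 3*lam 5 + lam 1*lam 3*lam 6 + lam 1*lam 4*lam 5 + lam 1*lam 4*lam 6 + lam 1*lam 5*lam 6 + lam 2*lam 3*lam 4 + lam 2*lam 3*lam 5 + lam 2*lam 3*lam 6 + lam 2*lam 4*lam 5 + lam 2*lam 4*lam 6 + lam 2*lam 5*lam 6 + lam 3*lam 4*lam 5 + lam 3*lam 4*lam 6 + lam 3*lam 5*lam 6 + lam 4*lam 5*lam 6 := ⟨_, rf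l⟩
  obtain ⟨e4, he4⟩ : ∃ a : ℚ, a = lam 0*lam 1*lam 2*lam 3 + lam 0*lam 1*lam 2*lam 4 + lam 0*lam 1*lam 2*lam 5 + lam 0*lam 1*lam 2*lam 6 + lam 0*lam 1*lam 3*lam 4 + lam 0*lam 1*lam 3*lam 5 + lam 0*lam 1*lam 3*lam 6 + lam 0*lam 1*lam 4*lam 5 + lam 0*lam 1*lam 4*lam 6 + lam 0*lam 1*lam 5*lam 6 + lam 0*lam 2*lam 3*lam 4 + lam 0*lam 2*lam 3*lam 5 + lam 0*lam 2*lam 3*lam 6 + lam 0*lam 2*lam 4*lam 5 + lam 0*lam 2*lam 4*lam 6 + lam 0*lam 2*lam 5*lam 6 + lam 0*lam 3*lam 4*lam 5 + lam 0*lam 3*lam 4*lam 6 + lam 0*lam 3*lam 5*lam 6 + lam 0*lam 4*lam 5*lam 6 + lam 1*lam 2*lam 3*lam 4 + lam 1*lam 2*lam 3*lam 5 + lam 1*lam 2*lam 3*lam 6 + lam 1*lam 2*lam 4*lam 5 + lam 1*lam 2*lam 4*lam 6 + lam 1*lam 2*lam 5*lam 6 + lam 1*lam 3*lam 4*lam 5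 + lam 1*lam 3*lam 4*lam 6 + lam 1*lam 3*lam 5*lam 6 + lam 1*lam 4*lam 5*lam 6 + lam 2*lam 3*lam 4*lam 5 + lam 2*lam 3*lam 4*lam 6 + lam 2*lam 3*lam 5*lam 6 + lam 2*lam 4*lam 5*lam 6 + lam 3*lam 4*lam 5*lam 6 := ⟨_, rfl⟩
  obtain ⟨e5, he5⟩ : ∃ a : ℚ, a = lam 0*lam 1*lam 2*lam 3*lam 4 + lam 0*lam 1*lam 2*lam 3*lam 5 + lam 0*lam 1*lam 2*lam 3*lam 6 + lam 0*lam 1*lam 2*lam 4*lam 5 + lam 0*lam 1*lam 2*lam 4*lam 6 + lam 0*lam 1*lam 2*lam 5*lam 6 + lam 0*lam 1*lam 3*lam 4*lam 5 + lam 0*lam 1*lam 3*lam 4*lam 6 + lam 0*lam 1*lam 3*lam 5*lam 6 + lam 0*lam 1*lam 4*lam 5*lam 6 + lam 0*lam 2*lam 3*lam 4*lam 5 + lam 0*lam 2*lam 3*lam 4*lam 6 + lam 0*lam 2*lam 3*lam 5*lam 6 + lam 0*lam 2*lam 4*lam 5*lam 6 + lam 0*lam 3*lam 4*lam 5*lam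 6 + lam 1*lam 2*lam 3*lam 4*lam 5 + lam 1*lam 2*lam 3*lam 4*lam 6 + lam 1*lam 2*lam 3*lam 5*lam 6 + lam 1*lam 2*lam 4*lam 5*lam 6 + lam 1*lam 3*lam 4*lam 5*lam 6 + lam 2*lam 3*lam 4*lam 5*lam 6 := ⟨_, rfl⟩
  obtain ⟨e6, he6⟩ : ∃ a : ℚ, a = lam 0*lam 1*lam 2*lam 3*lam 4*lam 5 + lam 0*lam 1*lam 2*lam 3*lam 4*lam 6 + lam 0*lam 1*lam 2*lam 3*lam 5*lam 6 + lam 0*lam 1*lam 2*lam 4*lam 5*lam 6 + lam 0*lam 1*lam 3*lam 4*lam 5*lam 6 + lam 0*lam 2*lam 3*lam 4*lam 5*lam 6 + lam 1*lam 2*lam 3*lam 4*lam 5*lam 6 := ⟨_, rfl⟩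
  obtain ⟨e7, he7⟩ : ∃ a : ℚ, a = lam 0*lam 1*lam 2*lam 3*lam 4*lam 5*lam 6 := ⟨_, rfl⟩
  have hvieta : ∀ x : ℚ, x^7 - e1*x^6 + e2*x^5 - e3*x^4 + e4*x^3 - e5*x^2 + e6*x - e7
      = (x - lam 0) * (x - lam 1) * (x - lam 2) * (x - lam 3) * (x - lam 4)
        * (x - lam 5) * (x - lam 6) := by
    intro x
    rw [he1, he2, he3, he4, he5, he6, he7]
    ring
  have hV : ∀ i : Fin 7,
      lam i^7 - e1*lam i^6 + e2*lam i^5 - e3*lam i^4 + e4*lam i^3 - e5*lam i^2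
        + e6*lam i - e7 = 0 := by
    intro i
    rw [hvieta (lam i), show (lam i - lam 0) * (lam i - lam 1) * (lam i - lam 2)
      * (lam i - lam 3) * (lam i - lam 4) * (lam i - lam 5) * (lam i - lam 6)
      = ∏ l : Fin 7, (lam i - lam l) from (Fin.prod_univ_seven (fun l => lam i - lam l)).symm]
    exact Finset.prod_eq_zero (Finset.mem_univ i) (sub_self _)
  have hinner : ∀ j : Fin 7, (∑ i : Fin 7, gg lam i j)
      = (-288 * lam j^3 * e3 + 576 * lam j^3 * e1 * e2 - 288 * lam j^3 * e1^3 + 720 * lam j^4 * e2 - 720 * lam j^4 * e1^2 + 288 * lam j^5 * e1 + 1440 * lam j^6) / Pd lam j := by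
    intro j
    have h1 : ∀ i : Fin 7, gg lam i j = (Fv lam i j / Pd lam i) / Pd lam j := by
      intro i; unfold gg; rw [div_div]
    have h2 : ∑ i : Fin 7, Fv lam i j / Pd lam i = -288 * lam j^3 * e3 + 576 * lam j^3 * e1 * e2 - 288 * lam j^3 * e1^3 + 720 * lam j^4 * e2 - 720 * lam j^4 * e1^2 + 288 * lam j^5 * e1 + 1440 * lam j^6 := by
      have hl := lag7 lam hlam (288 * lam j^3 * e2 * e7 - 288 * lam j^3 * e1^2 * e7 - 720 * lam j^4 * e1 * e7 + 288 * lam j^5 * e7) (-288 * lam j^3 * e2 * e6 - 288 * lam j^3 * e1 * e7 + 288 * lam j^3 * e1^2 * e6 - 720 * lam j^4 * e7 + 720 * lam j^4 * e1 * e6 - 288 * lam j^5 * e6) (-288 * lam j^3 * e7 + 288 * lam j^3 * e2 * e5 + 288 * lam j^3 * e1 * e6 - 288 * lam j^3 * e1^2 * e5 + 720 * lam j^4 * e6 - 720 * lam j^4 * e1 * e5 + 288 * lam j^5 * e5) (288 * lam j^3 * e6 - 288 * lam j^3 * e2 * e4 - 288 * lam j^3 * e1 * e5 + 288 * lam j^3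 * e1^2 * e4 - 720 * lam j^4 * e5 + 720 * lam j^4 * e1 * e4 - 288 * lam j^5 * e4 - 288 * lam j^9) (-288 * lam j^3 * e5 + 288 * lam j^3 * e2 * e3 + 288 * lam j^3 * e1 * e4 - 288 * lam j^3 * e1^2 * e3 + 720 * lam j^4 * e4 - 720 * lam j^4 * e1 * e3 + 288 * lam j^5 * e3 - 720 * lam j^8) (288 * lam j^3 * e4 - 288 * lam j^3 * e2^2 - 288 * lam j^3 * e1 * e3 + 288 * lam j^3 * e1^2 * e2 - 720 * lam j^4 * e3 + 720 * lam j^4 * e1 * e2 - 288 * lam j^5 * e2 + 288 * lam j^7)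
        (-288 * lam j^3 * e3 + 576 * lam j^3 * e1 * e2 - 288 * lam j^3 * e1^3 + 720 * lam j^4 * e2 - 720 * lam j^4 * e1^2 + 288 * lam j^5 * e1 + 1440 * lam j^6)
      rw [← hl]
      refine Finset.sum_congr rfl fun i _ => ?_
      congr 1
      unfold Fv
      linear_combination ((288 * lam j^3 * e2 - 288 * lam j^3 * e1^2 - 720 * lam j^4 * e1 + 288 * lam j^5) + (-288 * lam j^3 * e1 - 720 * lam j^4) * lam i + (-288 * lam j^3) * lam i ^ 2) * hV i
    simp only [h1]
    rw [← Finset.sum_div, h2]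
  have hfull : (∑ i : Fin 7, ∑ j : Fin 7, gg lam i j) = 1440 := by
    rw [Finset.sum_comm]
    have hl := lag7 lam hlam 0 0 0 (-288 * e3 + 576 * e1 * e2 - 288 * e1^3) (720 * e2 - 720 * e1^2) (288 * e1) 1440
    calc ∑ j : Fin 7, ∑ i : Fin 7, gg lam i j
        = ∑ j : Fin 7, (-288 * lam j^3 * e3 + 576 * lam j^3 * e1 * e2 - 288 * lam j^3 * e1^3 + 720 * lam j^4 * e2 - 720 * lam j^4 * e1^2 + 288 * lam j^5 * e1 + 1440 * lam j^6) / Pd lam j :=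
          Finset.sum_congr rfl fun j _ => hinner j
      _ = ∑ j : Fin 7, (0 + 0 * lam j + 0 * lam j ^ 2
            + (-288 * e3 + 576 * e1 * e2 - 288 * e1^3) * lam j ^ 3
            + (720 * e2 - 720 * e1^2) * lam j ^ 4 + 288 * e1 * lam j ^ 5
            + 1440 * lam j ^ 6) / Pd lam j := by
          refine Finset.sum_congr rfl fun j _ => ?_
          congr 1
          ring
      _ = 1440 := hl
  have hsplit : ∀ i j : Fin 7, gg lam i j = (if i < j then gg lam i j else 0)
      + (if j < i then gg lam i j else 0) + (if i = j then gg lam i j else 0) := by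
    intro i j
    rcases lt_trichotomy i j with h|h|h
    · simp [h, lt_asymm h, h.ne]
    · simp [h]
    · simp [h, lt_asymm h, h.ne']
  have hswap : (∑ i : Fin 7, ∑ j : Fin 7, if j < i then gg lam i j else 0)
      = ∑ i : Fin 7, ∑ j : Fin 7, if i < j then gg lam i j else 0 := by
    rw [Finset.sum_comm]
    exact Finset.sum_congr rfl fun a _ => Finset.sum_congr rfl fun b _ => by
      rw [gg_symm lam b a]
  have hdiagsum : (∑ i : Fin 7, ∑ j : Fin 7, if i = j then gg lam i j else 0) = 0 := by
    simp [Finset.sum_ite_eq, gg_diag]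
  have key : (∑ i : Fin 7, ∑ j : Fin 7, gg lam i j)
      = 2 * ∑ i : Fin 7, ∑ j : Fin 7, (if i < j then gg lam i j else 0) := by
    calc (∑ i : Fin 7, ∑ j : Fin 7, gg lam i j)
        = ∑ i : Fin 7, ∑ j : Fin 7, ((if i < j then gg lam i j else 0)
            + (if j < i then gg lam i j else 0) + (if i = j then gg lam i j else 0)) :=
          Finset.sum_congr rfl fun i _ => Finset.sum_congr rfl fun j _ => hsplit i j
      _ = (∑ i : Fin 7, ∑ j : Fin 7, if i < j then gg lam i j else 0)
            + (∑ i : Fin 7, ∑ j : Fin 7, if j < i then gg lam i j else 0)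
            + (∑ i : Fin 7, ∑ j : Fin 7, if i = j then gg lam i j else 0) := by
          simp [Finset.sum_add_distrib]
      _ = 2 * ∑ i : Fin 7, ∑ j : Fin 7, (if i < j then gg lam i j else 0) := by
          rw [hswap, hdiagsum]; ring
  rw [step_A lam hlam]
  have : (1440 : ℚ) = 2 * ∑ i : Fin 7, ∑ j : Fin 7, (if i < j then gg lam i j else 0) := by
    rw [← key, hfull]
  linarith
end

section
/- For every choice of pairwise distinct rational numbers λ_0, …, λ_7, one has Σ_{0 ≤ i < j ≤ 7} ( ( ∏_{a=0}^{2} (a·λ_i + (2 − a)·λ_j) )^4 ) / ( ∏_{l ∈ {0,…,7}, l∉{i,j}} (λ_i − λ_l)·(λ_j − λ_l) ) = 512. This is the number of lines on a general complete intersection Calabi–Yau threefold of type (2,2,2,2) in P^7. -/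
open Finset Polynomial

/-- `λᵢᵃ / ∏_{l ≠ i} (λᵢ − λ_l)`, the basic building block. -/
noncomputable def gfun (lam : Fin 8 → ℚ) (a : ℕ) (i : Fin 8) : ℚ :=
  lam i ^ a / ∏ l ∈ Finset.univ.erase i, (lam i - lam l)

/-- The symmetrized summand of the Bott sum, written over the denominators
`∏_{l ≠ i}(λᵢ − λ_l) · ∏_{l ≠ j}(λⱼ − λ_l)`. -/
noncomputable def ffun (lam : Fin 8 → ℚ) (i j : Fin 8) : ℚ :=
  -256 * (gfun lam 10 i * gfun lam 4 j + 2 * gfun lam 9 i * gfun lam 5 j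
    - gfun lam 8 i * gfun lam 6 j - 4 * gfun lam 7 i * gfun lam 7 j
    - gfun lam 6 i * gfun lam 8 j + 2 * gfun lam 5 i * gfun lam 9 j
    + gfun lam 4 i * gfun lam 10 j)

lemma ffun_symm (lam : Fin 8 → ℚ) (i j : Fin 8) : ffun lam i j = ffun lam j i := by
  unfold ffun; ring

lemma ffun_diag (lam : Fin 8 → ℚ) (i : Fin 8) : ffun lam i i = 0 := by
  unfold ffun gfun; ring

/-- Lagrange interpolation: `∑ᵢ λᵢᵃ / ∏_{l ≠ i}(λᵢ − λ_l)` is the degree-`7`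
coefficient of the interpolation of `Xᵃ` at the `8` nodes, i.e. `[a = 7]` for
`a ≤ 7`. -/
lemma lag (v : Fin 8 → ℚ) (hv : Function.Injective v) (a : ℕ) (ha : a ≤ 7) :
    ∑ i : Fin 8, gfun v a i = if a = 7 then 1 else 0 := by
  have hvs : Set.InjOn v ↑(Finset.univ : Finset (Fin 8)) := fun x _ y _ h => hv h
  have hdeg : (Polynomial.X ^ a : ℚ[X]).degree < (Finset.univ : Finset (Fin 8)).card := by
    rw [Polynomial.degree_X_pow]
    simp only [Finset.card_univ, Fintype.card_fin]
    exact_mod_cast Nat.lt_of_le_of_lt ha (by norm_num)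
  have h := Lagrange.eq_interpolate (f := Polynomial.X ^ a) hvs hdeg
  have hc := congrArg (fun p => Polynomial.coeff p 7) h
  simp only [Lagrange.interpolate_apply] at hc
  rw [Polynomial.finset_sum_coeff] at hc
  have hbasis : ∀ i : Fin 8, (Lagrange.basis Finset.univ v i).coeff 7
      = Lagrange.nodalWeight Finset.univ v i := by
    intro i
    rw [Lagrange.basis_eq_prod_sub_inv_mul_nodal_div (Finset.mem_univ i),
      ← Lagrange.nodal_erase_eq_nodal_div (Finset.mem_univ i), Polynomial.coeff_C_mul]
    have hmon : (Lagrange.nodal ((Finset.univ : Finset (Fin 8)).erase i) v).Monic :=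
      Lagrange.nodal_monic
    have hdeg' : (Lagrange.nodal ((Finset.univ : Finset (Fin 8)).erase i) v).natDegree = 7 := by
      rw [Lagrange.natDegree_nodal, Finset.card_erase_of_mem (Finset.mem_univ i)]
      simp
    rw [← hdeg', hmon.coeff_natDegree, mul_one]
  simp only [Polynomial.coeff_C_mul, hbasis, Polynomial.eval_pow, Polynomial.eval_X,
    Polynomial.coeff_X_pow] at hc
  have hiff : (if a = 7 then (1:ℚ) else 0) = if 7 = a then 1 else 0 := by
    by_cases h7 : a = 7 <;> simp [h7]; simp [Ne.symm h7]
  rw [hiff, hc]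
  refine Finset.sum_congr rfl fun i _ => ?_
  rw [gfun, Lagrange.nodalWeight, div_eq_mul_inv, Finset.prod_inv_distrib]

/-- Each Bott summand (for `i ≠ j`) equals the symmetrized form `ffun`. -/
lemma term_eq (lam : Fin 8 → ℚ) (hlam : Function.Injective lam) (i j : Fin 8) (hij : i ≠ j) :
    (([2,2,2,2] : List ℕ).map (fun d => ∏ a ∈ Finset.range (d + 1),
        ((a : ℚ) * lam i + ((d : ℚ) - (a : ℚ)) * lam j))).prod /
      ∏ l ∈ Finset.univ.filter (fun l => l ≠ i ∧ l ≠ j),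
        ((lam i - lam l) * (lam j - lam l)) = ffun lam i j := by
  have hne : ∀ {x y : Fin 8}, x ≠ y → lam x - lam y ≠ 0 :=
    fun h => sub_ne_zero.mpr (fun e => h (hlam e))
  set S := ((Finset.univ : Finset (Fin 8)).erase i).erase j with hS
  have hfil : (Finset.univ : Finset (Fin 8)).filter (fun l => l ≠ i ∧ l ≠ j) = S := by
    ext l; simp [hS, Finset.mem_erase]; tauto
  set P := ∏ l ∈ S, (lam i - lam l) with hPdef
  set Q := ∏ l ∈ S, (lam j - lam l) with hQdef
  have hmemS : ∀ l ∈ S, l ≠ i ∧ l ≠ j := by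
    intro l hl; simp [hS, Finset.mem_erase] at hl; tauto
  have hP : P ≠ 0 := Finset.prod_ne_zero_iff.mpr fun l hl => hne (hmemS l hl).1.symm
  have hQ : Q ≠ 0 := Finset.prod_ne_zero_iff.mpr fun l hl => hne (hmemS l hl).2.symm
  have hprod : ∏ l ∈ S, ((lam i - lam l) * (lam j - lam l)) = P * Q :=
    Finset.prod_mul_distrib
  have hwi : ∏ l ∈ Finset.univ.erase i, (lam i - lam l) = (lam i - lam j) * P := by
    rw [hPdef, hS,
      ← Finset.mul_prod_erase (Finset.univ.erase i) (fun l => lam i - lam l)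
        (Finset.mem_erase.mpr ⟨hij.symm, Finset.mem_univ j⟩)]
  have hwj : ∏ l ∈ Finset.univ.erase j, (lam j - lam l) = (lam j - lam i) * Q := by
    rw [hQdef, hS, Finset.erase_right_comm,
      ← Finset.mul_prod_erase (Finset.univ.erase j) (fun l => lam j - lam l)
        (Finset.mem_erase.mpr ⟨hij, Finset.mem_univ i⟩)]
  unfold ffun gfun
  rw [hfil, hprod, hwi, hwj]
  have hij' : lam i - lam j ≠ 0 := hne hij
  have hji' : lam j - lam i ≠ 0 := hne hij.symm
  simp only [List.map_cons, List.map_nil, List.prod_cons, List.prod_nil]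
  norm_num [Finset.prod_range_succ]
  field_simp
  ring

/-- The full (unrestricted) double sum of `ffun` equals `1024`. -/
lemma total (lam : Fin 8 → ℚ) (hlam : Function.Injective lam) :
    ∑ i : Fin 8, ∑ j : Fin 8, ffun lam i j = 1024 := by
  have S4 := lag lam hlam 4 (by norm_num)
  have S5 := lag lam hlam 5 (by norm_num)
  have S6 := lag lam hlam 6 (by norm_num)
  have S7 := lag lam hlam 7 (by norm_num)
  norm_num at S4 S5 S6 S7
  have inner : ∀ i, ∑ j : Fin 8, ffun lam i j = 1024 * gfun lam 7 i
      + 256 * (∑ j : Fin 8, gfun lam 8 j) * gfun lam 6 i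
      - 512 * (∑ j : Fin 8, gfun lam 9 j) * gfun lam 5 i
      - 256 * (∑ j : Fin 8, gfun lam 10 j) * gfun lam 4 i := by
    intro i
    simp only [ffun]
    rw [← Finset.mul_sum]
    simp only [Finset.sum_add_distrib, Finset.sum_sub_distrib, ← Finset.mul_sum]
    rw [S4, S5, S6, S7]
    ring
  rw [Finset.sum_congr rfl fun i _ => inner i]
  simp only [Finset.sum_add_distrib, Finset.sum_sub_distrib, ← Finset.mul_sum]
  rw [S4, S5, S6, S7]
  ring

/-- For every choice of pairwise distinct rational numbers `λ₀, …, λ₇`, the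
degree-one Bott sum `L(2,2,2,2; λ₀,…,λ₇)` equals `512`, the number of lines on
a general complete intersection Calabi–Yau threefold of type `(2,2,2,2)` in
`ℙ⁷`. -/
theorem bottSum1_2_2_2_2 (lam : Fin 8 → ℚ) (hlam : Function.Injective lam) :
    bottSum1 [2, 2, 2, 2] lam = 512 := by
  have hrw : bottSum1 [2, 2, 2, 2] lam
      = ∑ i : Fin 8, ∑ j : Fin 8, if i < j then ffun lam i j else 0 := by
    unfold bottSum1
    refine Finset.sum_congr rfl fun i _ => Finset.sum_congr rfl fun j _ => ?_
    by_cases h : i < j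
    · simp only [if_pos h]
      exact term_eq lam hlam i j (ne_of_lt h)
    · simp [h]
  have hswap : (∑ i : Fin 8, ∑ j : Fin 8, if j < i then ffun lam i j else 0)
      = ∑ i : Fin 8, ∑ j : Fin 8, if i < j then ffun lam i j else 0 := by
    rw [Finset.sum_comm]
    exact Finset.sum_congr rfl fun i _ => Finset.sum_congr rfl fun j _ => by
      rw [ffun_symm lam j i]
  have hsplit : (∑ i : Fin 8, ∑ j : Fin 8, if i < j then ffun lam i j else 0)
      + (∑ i : Fin 8, ∑ j : Fin 8, if j < i then ffun lam i j else 0)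
      = ∑ i : Fin 8, ∑ j : Fin 8, ffun lam i j := by
    rw [← Finset.sum_add_distrib]
    refine Finset.sum_congr rfl fun i _ => ?_
    rw [← Finset.sum_add_distrib]
    refine Finset.sum_congr rfl fun j _ => ?_
    rcases lt_trichotomy i j with h | h | h
    · simp [h, asymm h]
    · subst h; simp [ffun_diag]
    · simp [h, asymm h]
  rw [hrw]
  have := total lam hlam
  rw [hswap] at hsplit
  linarith [hsplit, this]
end

section
/- Let k ∈ {1,2,3,4}, let d_1 ≥ … ≥ d_k ≥ 2 be integers with Σ_{m=1}^{k} d_m = k + 4, and set r = k + 3. Then the degree-one Bott sum L(d_1,…,d_k; λ_0,…,λ_r) = Σ_{0 ≤ i < j ≤ r} ( ∏_{m=1}^{k} ∏_{a=0}^{d_m} (a·λ_i + (d_m − a)·λ_j) ) / ( ∏_{l ∈ {0,…,r}, l∉{i,j}} (λ_i − λ_l)·(λ_j − λ_l) ) takes the same value for every choice of pairwise distinct rational numbers λ_0, …, λ_r; that is, L(d_1,…,d_k; λ) = L(d_1,…,d_k; μ) for any two tuples λ, μ of pairwise distinct rationals. -/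
open Finset Polynomial

lemma lagrange_coeff_sum {n : ℕ} (lam : Fin n → ℚ) (hlam : Function.Injective lam)
    {m : ℕ} (hm : m < n) :
    ∑ i : Fin n, lam i ^ m / ∏ l ∈ Finset.univ.erase i, (lam i - lam l)
      = if m = n - 1 then 1 else 0 := by
  have hinj : Set.InjOn lam (Finset.univ : Finset (Fin n)) := hlam.injOn
  have hcard : #(Finset.univ : Finset (Fin n)) = n := by simp
  have hdeg : (X ^ m : ℚ[X]).degree < #(Finset.univ : Finset (Fin n)) := by
    rw [hcard, degree_X_pow]; exact_mod_cast hm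
  have h := Lagrange.eq_interpolate (v := lam) hinj hdeg
  have h2 := congrArg (fun p => Polynomial.coeff p (n - 1)) h
  simp only [Lagrange.interpolate_apply, finset_sum_coeff, coeff_C_mul, eval_pow, eval_X,
    coeff_X_pow] at h2
  have hbasis : ∀ i : Fin n, (Lagrange.basis Finset.univ lam i).coeff (n - 1)
      = (∏ l ∈ Finset.univ.erase i, (lam i - lam l))⁻¹ := by
    intro i
    have hnd : (Lagrange.basis Finset.univ lam i).natDegree = n - 1 := by
      rw [Lagrange.natDegree_basis hinj (mem_univ i), hcard]
    rw [← hnd, Polynomial.coeff_natDegree, Lagrange.basis, leadingCoeff_prod]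
    rw [← Finset.prod_inv_distrib]
    refine Finset.prod_congr rfl fun j hj => ?_
    have hij : lam i ≠ lam j := by
      have := (Finset.mem_erase.mp hj).1
      exact fun hc => this (hlam hc.symm)
    rw [Lagrange.basisDivisor, leadingCoeff_mul, leadingCoeff_C,
      (monic_X_sub_C (lam j)).leadingCoeff, mul_one]
  simp only [hbasis] at h2
  simp only [div_eq_mul_inv]
  rw [← h2]
  by_cases h : m = n - 1 <;> simp [h, eq_comm]

noncomputable def Qpoly (ds : List ℕ) : MvPolynomial (Fin 2) ℚ :=
  (ds.map (fun d => ∏ a ∈ Finset.range (d + 1),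
      (MvPolynomial.C (a : ℚ) * MvPolynomial.X 0 +
        MvPolynomial.C ((d : ℚ) - (a : ℚ)) * MvPolynomial.X 1))).prod
    * (MvPolynomial.X 0 - MvPolynomial.X 1) ^ 2

lemma eval_Qpoly (ds : List ℕ) (x y : ℚ) :
    MvPolynomial.eval ![x, y] (Qpoly ds) =
      (ds.map (fun d => ∏ a ∈ Finset.range (d + 1),
        ((a : ℚ) * x + ((d : ℚ) - (a : ℚ)) * y))).prod * (x - y) ^ 2 := by
  unfold Qpoly
  rw [map_mul, map_list_prod]
  simp [List.map_map, Function.comp_def, map_prod]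

lemma prod_lin_symm (d : ℕ) (x y : ℚ) :
    ∏ a ∈ Finset.range (d + 1), ((a : ℚ) * x + ((d : ℚ) - (a : ℚ)) * y)
      = ∏ a ∈ Finset.range (d + 1), ((a : ℚ) * y + ((d : ℚ) - (a : ℚ)) * x) := by
  rw [← Finset.prod_range_reflect]
  refine Finset.prod_congr rfl fun a ha => ?_
  have ha' : a ≤ d := Nat.lt_succ_iff.mp (Finset.mem_range.mp ha)
  have hc : ((d + 1 - 1 - a : ℕ) : ℚ) = (d : ℚ) - (a : ℚ) := by
    have : d + 1 - 1 - a = d - a := by omega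
    rw [this, Nat.cast_sub ha']
  rw [hc]
  ring

lemma eval_Qpoly_symm (ds : List ℕ) (x y : ℚ) :
    MvPolynomial.eval ![x, y] (Qpoly ds) = MvPolynomial.eval ![y, x] (Qpoly ds) := by
  rw [eval_Qpoly, eval_Qpoly]
  have : (ds.map (fun d => ∏ a ∈ Finset.range (d + 1),
        ((a : ℚ) * x + ((d : ℚ) - (a : ℚ)) * y)))
      = (ds.map (fun d => ∏ a ∈ Finset.range (d + 1),
        ((a : ℚ) * y + ((d : ℚ) - (a : ℚ)) * x))) := by
    refine List.map_congr_left fun d _ => prod_lin_symm d x y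
  rw [this, show (x - y) ^ 2 = (y - x) ^ 2 by ring]

lemma totalDegree_Qpoly (ds : List ℕ) :
    (Qpoly ds).totalDegree ≤ ds.sum + ds.length + 2 := by
  unfold Qpoly
  refine (MvPolynomial.totalDegree_mul _ _).trans ?_
  have h2 : ((MvPolynomial.X (0 : Fin 2) - MvPolynomial.X 1 :
      MvPolynomial (Fin 2) ℚ) ^ 2).totalDegree ≤ 2 := by
    refine (MvPolynomial.totalDegree_pow _ _).trans ?_
    have h3 : (MvPolynomial.X (0 : Fin 2) - MvPolynomial.X 1 :
        MvPolynomial (Fin 2) ℚ).totalDegree ≤ 1 := by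
      rw [sub_eq_add_neg]
      refine (MvPolynomial.totalDegree_add _ _).trans (max_le ?_ ?_)
      · rw [MvPolynomial.totalDegree_X]
      · rw [MvPolynomial.totalDegree_neg, MvPolynomial.totalDegree_X]
    omega
  have key : ∀ (c e : ℚ),
      (MvPolynomial.C c * MvPolynomial.X (0 : Fin 2) +
        MvPolynomial.C e * MvPolynomial.X (1 : Fin 2)).totalDegree ≤ 1 := by
    intro c e
    refine (MvPolynomial.totalDegree_add _ _).trans (max_le ?_ ?_) <;>
    · refine (MvPolynomial.totalDegree_mul _ _).trans ?_
      rw [MvPolynomial.totalDegree_C, MvPolynomial.totalDegree_X]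
  have h1 : ((ds.map (fun d => ∏ a ∈ Finset.range (d + 1),
      (MvPolynomial.C (a : ℚ) * MvPolynomial.X (0 : Fin 2) +
        MvPolynomial.C ((d : ℚ) - (a : ℚ)) * MvPolynomial.X (1 : Fin 2)))).prod).totalDegree
      ≤ ds.sum + ds.length := by
    induction ds with
    | nil => simp
    | cons d tl ih =>
      simp only [List.map_cons, List.prod_cons, List.sum_cons, List.length_cons]
      refine (MvPolynomial.totalDegree_mul _ _).trans ?_
      have hd : ((∏ a ∈ Finset.range (d + 1),
          (MvPolynomial.C (a : ℚ) * MvPolynomial.X (0 : Fin 2) +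
            MvPolynomial.C ((d : ℚ) - (a : ℚ)) *
              MvPolynomial.X (1 : Fin 2)))).totalDegree ≤ d + 1 := by
        refine (MvPolynomial.totalDegree_finset_prod _ _).trans ?_
        refine le_trans (Finset.sum_le_sum
          (fun a _ => key (a : ℚ) ((d : ℚ) - (a : ℚ)))) ?_
        simp
      omega
  exact le_trans (add_le_add h1 h2) (by omega)

noncomputable def Aprod {n : ℕ} (lam : Fin n → ℚ) (i : Fin n) : ℚ :=
  ∏ l ∈ Finset.univ.erase i, (lam i - lam l)


lemma bottSum1_const {n : ℕ} (hn : 2 ≤ n) (ds : List ℕ)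
    (hdeg : ds.sum + ds.length + 2 ≤ 2 * n - 2)
    (lam : Fin n → ℚ) (hlam : Function.Injective lam) :
    bottSum1 ds lam = -(1/2) * MvPolynomial.coeff
      (Finsupp.single (0 : Fin 2) (n - 1) + Finsupp.single 1 (n - 1)) (Qpoly ds) := by
  classical
  set mstar : Fin 2 →₀ ℕ :=
    Finsupp.single (0 : Fin 2) (n - 1) + Finsupp.single 1 (n - 1) with hmstar
  have hm0 : mstar 0 = n - 1 := by simp [hmstar, Finsupp.single_apply]
  have hm1 : mstar 1 = n - 1 := by simp [hmstar, Finsupp.single_apply]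
  have hA_ne : ∀ i, Aprod lam i ≠ 0 := by
    intro i
    refine Finset.prod_ne_zero_iff.mpr fun l hl => sub_ne_zero_of_ne fun hc => ?_
    exact (Finset.mem_erase.mp hl).1 (hlam hc).symm
  set T : Fin n → Fin n → ℚ := fun i j =>
    MvPolynomial.eval ![lam i, lam j] (Qpoly ds) / (Aprod lam i * Aprod lam j) with hT
  have hTsymm : ∀ i j, T i j = T j i := by
    intro i j
    simp only [hT]
    rw [eval_Qpoly_symm, mul_comm]
  have hTdiag : ∀ i, T i i = 0 := by
    intro i
    simp only [hT]
    rw [eval_Qpoly]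
    simp
  -- Step 1 : bottSum1 as sum over i<j of -T i j
  have step1 : bottSum1 ds lam = ∑ i : Fin n, ∑ j : Fin n, (if i < j then -T i j else 0) := by
    unfold bottSum1
    refine Finset.sum_congr rfl fun i _ => Finset.sum_congr rfl fun j _ => ?_
    by_cases hij : i < j
    · rw [if_pos hij, if_pos hij]
      have hne : i ≠ j := ne_of_lt hij
      have hc : lam i - lam j ≠ 0 := sub_ne_zero_of_ne fun h => hne (hlam h)
      have hfilter : Finset.univ.filter (fun l => l ≠ i ∧ l ≠ j)
          = (Finset.univ.erase i).erase j := by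
        ext l; simp [Finset.mem_erase, and_comm]
      have hAi : Aprod lam i = (lam i - lam j) *
          ∏ l ∈ (Finset.univ.erase i).erase j, (lam i - lam l) :=
        (Finset.mul_prod_erase _ _
          (Finset.mem_erase.mpr ⟨hne.symm, Finset.mem_univ j⟩)).symm
      have hAj : Aprod lam j = (lam j - lam i) *
          ∏ l ∈ (Finset.univ.erase i).erase j, (lam j - lam l) := by
        rw [show (Finset.univ.erase i).erase j = (Finset.univ.erase j).erase i from
          Finset.erase_right_comm]
        exact (Finset.mul_prod_erase _ _
          (Finset.mem_erase.mpr ⟨hne, Finset.mem_univ i⟩)).symm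
      have hprod : Aprod lam i * Aprod lam j = -((lam i - lam j) ^ 2 *
          ∏ l ∈ (Finset.univ.erase i).erase j, ((lam i - lam l) * (lam j - lam l))) := by
        rw [hAi, hAj, Finset.prod_mul_distrib]
        ring
      simp only [hT]
      rw [eval_Qpoly, hfilter, hprod, div_neg, neg_neg,
        mul_comm ((ds.map (fun d => ∏ a ∈ Finset.range (d + 1),
          ((a : ℚ) * lam i + ((d : ℚ) - (a : ℚ)) * lam j))).prod) ((lam i - lam j) ^ 2),
        mul_div_mul_left _ _ (pow_ne_zero 2 hc)]
    · rw [if_neg hij, if_neg hij]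
  -- Step 2 : doubling
  have hsplit : ∀ i j, T i j = (if i < j then T i j else 0) + (if j < i then T i j else 0) := by
    intro i j
    rcases lt_trichotomy i j with h | h | h
    · simp [h, asymm h]
    · subst h; simp [hTdiag i]
    · simp [h, asymm h, not_lt_of_gt h]
  have hswap : ∑ i : Fin n, ∑ j : Fin n, (if j < i then T i j else 0)
      = ∑ i : Fin n, ∑ j : Fin n, (if i < j then T i j else 0) := by
    rw [Finset.sum_comm]
    exact Finset.sum_congr rfl fun i _ => Finset.sum_congr rfl fun j _ => by rw [hTsymm j i]
  have hdouble : ∑ i : Fin n, ∑ j : Fin n, T i j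
      = 2 * ∑ i : Fin n, ∑ j : Fin n, (if i < j then T i j else 0) := by
    calc ∑ i : Fin n, ∑ j : Fin n, T i j
        = ∑ i : Fin n, ∑ j : Fin n,
            ((if i < j then T i j else 0) + (if j < i then T i j else 0)) :=
          Finset.sum_congr rfl fun i _ => Finset.sum_congr rfl fun j _ => hsplit i j
      _ = (∑ i : Fin n, ∑ j : Fin n, (if i < j then T i j else 0))
            + ∑ i : Fin n, ∑ j : Fin n, (if j < i then T i j else 0) := by
          simp [Finset.sum_add_distrib]
      _ = 2 * ∑ i : Fin n, ∑ j : Fin n, (if i < j then T i j else 0) := by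
          rw [hswap]; ring
  -- Step 3 : expansion into monomials
  have expand : ∀ i j : Fin n, T i j = ∑ d ∈ (Qpoly ds).support,
      MvPolynomial.coeff d (Qpoly ds) *
        ((lam i ^ (d 0) / Aprod lam i) * (lam j ^ (d 1) / Aprod lam j)) := by
    intro i j
    simp only [hT]
    rw [MvPolynomial.eval_eq', Finset.sum_div]
    refine Finset.sum_congr rfl fun d _ => ?_
    rw [Fin.prod_univ_two]
    simp only [Matrix.cons_val_zero, Matrix.cons_val_one, Matrix.head_cons]
    rw [mul_div_assoc, ← div_mul_div_comm]
  have hS : ∀ m : ℕ, m < n →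
      (∑ i : Fin n, lam i ^ m / Aprod lam i) = if m = n - 1 then 1 else 0 :=
    fun m hm => lagrange_coeff_sum lam hlam hm
  have key : ∑ i : Fin n, ∑ j : Fin n, T i j = MvPolynomial.coeff mstar (Qpoly ds) := by
    have swap1 : ∑ i : Fin n, ∑ j : Fin n, T i j = ∑ d ∈ (Qpoly ds).support,
        MvPolynomial.coeff d (Qpoly ds) *
          ((∑ i : Fin n, lam i ^ (d 0) / Aprod lam i)
            * (∑ j : Fin n, lam j ^ (d 1) / Aprod lam j)) := by
      simp only [expand]
      rw [show (∑ i : Fin n, ∑ j : Fin n, ∑ d ∈ (Qpoly ds).support,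
          MvPolynomial.coeff d (Qpoly ds) *
            (lam i ^ (d 0) / Aprod lam i * (lam j ^ (d 1) / Aprod lam j)))
        = ∑ i : Fin n, ∑ d ∈ (Qpoly ds).support, ∑ j : Fin n,
          MvPolynomial.coeff d (Qpoly ds) *
            (lam i ^ (d 0) / Aprod lam i * (lam j ^ (d 1) / Aprod lam j)) from
        Finset.sum_congr rfl fun i _ => Finset.sum_comm, Finset.sum_comm]
      refine Finset.sum_congr rfl fun d _ => ?_
      simp_rw [← Finset.mul_sum]
      rw [← Finset.sum_mul]
    rw [swap1]
    have hzero : ∀ d ∈ (Qpoly ds).support, d ≠ mstar →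
        MvPolynomial.coeff d (Qpoly ds) *
          ((∑ i : Fin n, lam i ^ (d 0) / Aprod lam i)
            * (∑ j : Fin n, lam j ^ (d 1) / Aprod lam j)) = 0 := by
      intro d hd hne
      have h1 := MvPolynomial.le_totalDegree hd
      have h2 := totalDegree_Qpoly ds
      have h3 : (d.sum fun _ e => e) = d 0 + d 1 := by
        rw [Finsupp.sum_fintype]
        · exact Fin.sum_univ_two _
        · intro _; rfl
      have hsum2 : d 0 + d 1 ≤ 2 * n - 2 := by omega
      have hne2 : ¬(d 0 = n - 1 ∧ d 1 = n - 1) := by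
        rintro ⟨h0, h1'⟩
        apply hne
        ext l
        fin_cases l
        · show d 0 = mstar 0
          rw [h0, hm0]
        · show d 1 = mstar 1
          rw [h1', hm1]
      have hcase : d 0 ≤ n - 2 ∨ d 1 ≤ n - 2 := by omega
      rcases hcase with h | h
      · have hs := hS (d 0) (by omega)
        rw [if_neg (by omega)] at hs
        rw [hs, zero_mul, mul_zero]
      · have hs := hS (d 1) (by omega)
        rw [if_neg (by omega)] at hs
        rw [hs, mul_zero, mul_zero]
    by_cases hmem : mstar ∈ (Qpoly ds).support
    · rw [Finset.sum_eq_single_of_mem mstar hmem hzero, hm0, hm1,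
        hS (n - 1) (by omega), if_pos rfl]
      ring
    · rw [Finset.sum_eq_zero (fun d hd => hzero d hd (fun hc => hmem (hc ▸ hd)))]
      rw [MvPolynomial.notMem_support_iff.mp hmem]
  -- assemble
  have step2 : ∑ i : Fin n, ∑ j : Fin n, (if i < j then -T i j else 0)
      = -∑ i : Fin n, ∑ j : Fin n, (if i < j then T i j else 0) := by
    rw [← Finset.sum_neg_distrib]
    refine Finset.sum_congr rfl fun i _ => ?_
    rw [← Finset.sum_neg_distrib]
    refine Finset.sum_congr rfl fun j _ => ?_
    split <;> simp
  rw [step1, step2]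
  rw [hmstar] at key
  linarith [hdouble, key]

/-- Let `k ∈ {1,2,3,4}` and let `ds = [d₁, …, d_k]` be a nonincreasing list of
integers, each at least `2`, with `d₁ + ⋯ + d_k = k + 4` (the Calabi–Yau
condition), and set `r = k + 3`.  Then the degree-one Bott sum
`L(d₁,…,d_k; λ₀,…,λ_r)` takes the same value for every choice of pairwise
distinct rational numbers `λ₀, …, λ_r`. -/
theorem bottSum1_independent (k : ℕ) (hk1 : 1 ≤ k) (hk4 : k ≤ 4)
    (ds : List ℕ) (hlen : ds.length = k)
    (hsorted : ds.Pairwise (· ≥ ·))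
    (h2 : ∀ x ∈ ds, 2 ≤ x)
    (hsum : ds.sum = k + 4)
    (r : ℕ) (hr : r = k + 3)
    (lam mu : Fin (r + 1) → ℚ)
    (hlam : Function.Injective lam) (hmu : Function.Injective mu) :
    bottSum1 ds lam = bottSum1 ds mu := by
  subst hr
  have hn : 2 ≤ k + 3 + 1 := by omega
  have hdeg : ds.sum + ds.length + 2 ≤ 2 * (k + 3 + 1) - 2 := by omega
  rw [bottSum1_const hn ds hdeg lam hlam, bottSum1_const hn ds hdeg mu hmu]
end

section
/- Let N_1 = 1280, N_2 = 92448, N_3 = 422690816/27, N_4 = 3883914084, N_5 = 29773082054656/25, N_6 = 417874607302656 (the genus-zero Gromov–Witten invariants of degrees 1 through 6 of a general complete intersection Calabi–Yau threefold of type (4,2) in P^5). Then there exists a unique tuple of rational numbers (n_1, …, n_6) satisfying N_d = Σ_{k ∣ d} n_{d/k} / k^3 for each d ∈ {1,…,6}, and it is given by n_1 = 1280, n_2 = 92288, n_3 = 15655168, n_4 = 3883902528, n_5 = 1190923282176, n_6 = 417874605342336. -/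
/-- Let `N 1, …, N 6` be the genus-zero Gromov–Witten invariants of degrees
`1` through `6` of a general complete intersection Calabi–Yau threefold of type `(4,2)` in `ℙ⁵`.
Then there is a unique tuple of rational numbers `(n 1, …, n 6)` satisfying the
instanton-number relations `N d = ∑_{k ∣ d} n (d/k) / k³` for `d = 1, …, 6`,
and it is given by the values listed below (the numbers of rational curves of
degrees `1` through `6`, as predicted by mirror symmetry). -/
theorem instanton_numbers_4_2 (N : ℕ → ℚ)
    (hN1 : N 1 = 1280) (hN2 : N 2 = 92448) (hN3 : N 3 = 422690816 / 27)
    (hN4 : N 4 = 3883914084) (hN5 : N 5 = 29773082054656 / 25) (hN6 : N 6 = 417874607302656) :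
    ∀ n : ℕ → ℚ,
      (∀ d ∈ Finset.Icc 1 6, N d = ∑ k ∈ Nat.divisors d, n (d / k) / (k : ℚ) ^ 3) ↔
      (n 1 = 1280 ∧ n 2 = 92288 ∧ n 3 = 15655168 ∧
        n 4 = 3883902528 ∧ n 5 = 1190923282176 ∧ n 6 = 417874605342336) := by
  intro n
  have d1 : Nat.divisors 1 = {1} := by decide
  have d2 : Nat.divisors 2 = {1, 2} := by decide
  have d3 : Nat.divisors 3 = {1, 3} := by decide
  have d4 : Nat.divisors 4 = {1, 2, 4} := by decide
  have d5 : Nat.divisors 5 = {1, 5} := by decide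
  have d6 : Nat.divisors 6 = {1, 2, 3, 6} := by decide
  constructor
  · intro h
    have h1 := h 1 (by decide)
    have h2 := h 2 (by decide)
    have h3 := h 3 (by decide)
    have h4 := h 4 (by decide)
    have h5 := h 5 (by decide)
    have h6 := h 6 (by decide)
    rw [d1] at h1; rw [d2] at h2; rw [d3] at h3; rw [d4] at h4
    rw [d5] at h5; rw [d6] at h6
    simp [Finset.sum_insert, hN1, hN2, hN3, hN4, hN5, hN6] at h1 h2 h3 h4 h5 h6
    norm_num at h1 h2 h3 h4 h5 h6
    refine ⟨?_, ?_, ?_, ?_, ?_, ?_⟩ <;> linarith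
  · rintro ⟨e1, e2, e3, e4, e5, e6⟩ d hd
    fin_cases hd <;>
      simp_all [d1, d2, d3, d4, d5, d6] <;> norm_num
end

section
/- Let N_1 = 1053, N_2 = 423549/8, N_3 = 6424365, N_4 = 72925120125/64, N_5 = 31223486573928/125, N_6 = 501287722516269/8 (the genus-zero Gromov–Witten invariants of degrees 1 through 6 of a general complete intersection Calabi–Yau threefold of type (3,3) in P^5). Then there exists a unique tuple of rational numbers (n_1, …, n_6) satisfying N_d = Σ_{k ∣ d} n_{d/k} / k^3 for each d ∈ {1,…,6}, and it is given by n_1 = 1053, n_2 = 52812, n_3 = 6424326, n_4 = 1139448384, n_5 = 249787892583, n_6 = 62660964509532. -/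
/-- Let `N 1, …, N 6` be the genus-zero Gromov–Witten invariants of degrees
`1` through `6` of a general complete intersection Calabi–Yau threefold of type `(3,3)` in `ℙ⁵`.
Then there is a unique tuple of rational numbers `(n 1, …, n 6)` satisfying the
instanton-number relations `N d = ∑_{k ∣ d} n (d/k) / k³` for `d = 1, …, 6`,
and it is given by the values listed below (the numbers of rational curves of
degrees `1` through `6`, as predicted by mirror symmetry). -/
theorem instanton_numbers_3_3 (N : ℕ → ℚ)
    (hN1 : N 1 = 1053) (hN2 : N 2 = 423549 / 8) (hN3 : N 3 = 6424365)
    (hN4 : N 4 = 72925120125 / 64) (hN5 : N 5 = 31223486573928 / 125) (hN6 : N 6 = 501287722516269 / 8) :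
    ∀ n : ℕ → ℚ,
      (∀ d ∈ Finset.Icc 1 6, N d = ∑ k ∈ Nat.divisors d, n (d / k) / (k : ℚ) ^ 3) ↔
      (n 1 = 1053 ∧ n 2 = 52812 ∧ n 3 = 6424326 ∧
        n 4 = 1139448384 ∧ n 5 = 249787892583 ∧ n 6 = 62660964509532) := by
  intro n
  have d1 : Nat.divisors 1 = {1} := by decide
  have d2 : Nat.divisors 2 = {1, 2} := by decide
  have d3 : Nat.divisors 3 = {1, 3} := by decide
  have d4 : Nat.divisors 4 = {1, 2, 4} := by decide
  have d5 : Nat.divisors 5 = {1, 5} := by decide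
  have d6 : Nat.divisors 6 = {1, 2, 3, 6} := by decide
  constructor
  · intro h
    have h1 := h 1 (by decide)
    have h2 := h 2 (by decide)
    have h3 := h 3 (by decide)
    have h4 := h 4 (by decide)
    have h5 := h 5 (by decide)
    have h6 := h 6 (by decide)
    rw [hN1, d1] at h1
    rw [hN2, d2] at h2
    rw [hN3, d3] at h3
    rw [hN4, d4] at h4
    rw [hN5, d5] at h5
    rw [hN6, d6] at h6
    norm_num [Finset.sum_insert, Finset.sum_singleton] at h1 h2 h3 h4 h5 h6
    refine ⟨h1.symm, ?_, ?_, ?_, ?_, ?_⟩ <;> linarith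
  · rintro ⟨e1, e2, e3, e4, e5, e6⟩ d hd
    fin_cases hd <;>
      norm_num [d1, d2, d3, d4, d5, d6, Finset.sum_insert, Finset.sum_singleton,
        e1, e2, e3, e4, e5, e6, hN1, hN2, hN3, hN4, hN5, hN6]
end

section
/- Let N_1 = 720, N_2 = 22518, N_3 = 4834592/3, N_4 = 672808059/4, N_5 = 541923292944/25, N_6 = 3195558106836 (the genus-zero Gromov–Witten invariants of degrees 1 through 6 of a general complete intersection Calabi–Yau threefold of type (3,2,2) in P^6). Then there exists a unique tuple of rational numbers (n_1, …, n_6) satisfying N_d = Σ_{k ∣ d} n_{d/k} / k^3 for each d ∈ {1,…,6}, and it is given by n_1 = 720, n_2 = 22428, n_3 = 1611504, n_4 = 168199200, n_5 = 21676931712, n_6 = 3195557904564. -/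
/-- Let `N 1, …, N 6` be the genus-zero Gromov–Witten invariants of degrees
`1` through `6` of a general complete intersection Calabi–Yau threefold of type `(3,2,2)` in `ℙ⁶`.
Then there is a unique tuple of rational numbers `(n 1, …, n 6)` satisfying the
instanton-number relations `N d = ∑_{k ∣ d} n (d/k) / k³` for `d = 1, …, 6`,
and it is given by the values listed below (the numbers of rational curves of
degrees `1` through `6`, as predicted by mirror symmetry). -/
theorem instanton_numbers_3_2_2 (N : ℕ → ℚ)
    (hN1 : N 1 = 720) (hN2 : N 2 = 22518) (hN3 : N 3 = 4834592 / 3)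
    (hN4 : N 4 = 672808059 / 4) (hN5 : N 5 = 541923292944 / 25) (hN6 : N 6 = 3195558106836) :
    ∀ n : ℕ → ℚ,
      (∀ d ∈ Finset.Icc 1 6, N d = ∑ k ∈ Nat.divisors d, n (d / k) / (k : ℚ) ^ 3) ↔
      (n 1 = 720 ∧ n 2 = 22428 ∧ n 3 = 1611504 ∧
        n 4 = 168199200 ∧ n 5 = 21676931712 ∧ n 6 = 3195557904564) := by
  intro n
  constructor
  · intro h
    have h1 := h 1 (by decide)
    have h2 := h 2 (by decide)
    have h3 := h 3 (by decide)
    have h4 := h 4 (by decide)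
    have h5 := h 5 (by decide)
    have h6 := h 6 (by decide)
    norm_num [Nat.divisors, Finset.sum_filter, Finset.sum_Ico_succ_top, hN1, hN2, hN3, hN4, hN5, hN6] at h1 h2 h3 h4 h5 h6
    refine ⟨?_, ?_, ?_, ?_, ?_, ?_⟩ <;> linarith
  · rintro ⟨h1, h2, h3, h4, h5, h6⟩ d hd
    fin_cases hd <;>
      norm_num [Nat.divisors, Finset.sum_filter, Finset.sum_Ico_succ_top, hN1, hN2, hN3, hN4, hN5, hN6, h1, h2, h3, h4, h5, h6]
end
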